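/- arXiv:2510.10133 — 8 statements merged into one kernel-verified Lean document; each statement's English description precedes it below -/
import Mathlib

section
/- The generating function for ρ_ped(n) satisfies ∑_{n≥0} ρ_ped(n) q^n = (q^8;q^8)_∞/(q^2;q^2)_∞ − 1/(1−q^2), as formal power series. -/
open PowerSeries Finset

/-- The infinite product `(q^a; q^a)_∞ = ∏_{k ≥ 1} (1 - q^{a k})`, encoded as the formal
power series whose `n`-th coefficient is the (stabilized) `n`-th coefficient of the
partial products `∏_{k=1}^{n+1} (1 - q^{a k})`.  For `a ≥ 1` this agrees with the usual
infinite product since factors with `a k > n` do not affect the coefficient of `q^n`. -/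
noncomputable def eulerProd (a : ℕ) : PowerSeries ℚ :=
  PowerSeries.mk fun n =>
    PowerSeries.coeff n (∏ k ∈ Finset.range (n + 1), (1 - (PowerSeries.X : PowerSeries ℚ) ^ (a * (k + 1))))

/-- `ρ_ped(n)`: the number of partitions of `n` whose largest part `m` occurs exactly
once and whose remaining parts form a partition of `m` with distinct even parts
(odd parts unrestricted). -/
noncomputable def rhoPed (n : ℕ) : ℕ :=
  Nat.card {p : n.Partition // ∃ m ∈ p.parts, p.parts.count m = 1 ∧
    (∀ x ∈ p.parts, x ≤ m) ∧ (p.parts.erase m).sum = m ∧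
    ∀ x ∈ p.parts.erase m, Even x → (p.parts.erase m).count x = 1}

namespace RhoPedAux

noncomputable section

open scoped Classical

variable {α : Type*}

/-- A convenience constructor for the power series whose coefficients indicate a subset. -/
def indicatorSeries (α : Type*) [Semiring α] (s : Set ℕ) : PowerSeries α :=
  PowerSeries.mk fun n => if n ∈ s then 1 else 0

theorem coeff_indicator (s : Set ℕ) [Semiring α] (n : ℕ) :
    coeff n (indicatorSeries α s) = if n ∈ s then 1 else 0 :=
  coeff_mk _ _

theorem coeff_indicator_pos (s : Set ℕ) [Semiring α] (n : ℕ) (h : n ∈ s) :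
    coeff n (indicatorSeries α s) = 1 := by rw [coeff_indicator, if_pos h]

theorem coeff_indicator_neg (s : Set ℕ) [Semiring α] (n : ℕ) (h : n ∉ s) :
    coeff n (indicatorSeries α s) = 0 := by rw [coeff_indicator, if_neg h]

theorem constantCoeff_indicator (s : Set ℕ) [Semiring α] :
    constantCoeff (indicatorSeries α s) = if 0 ∈ s then 1 else 0 :=
  rfl

theorem two_series (i : ℕ) [Semiring α] :
    1 + (X : PowerSeries α) ^ i.succ = indicatorSeries α {0, i.succ} := by
  ext n
  simp only [coeff_indicator, coeff_one, coeff_X_pow, Set.mem_insert_iff, Set.mem_singleton_iff,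
    map_add]
  cases' n with d
  · simp [(Nat.succ_ne_zero i).symm]
  · simp [Nat.succ_ne_zero d]

theorem num_series' [Field α] (i : ℕ) :
    (1 - (X : PowerSeries α) ^ (i + 1))⁻¹ = indicatorSeries α {k | i + 1 ∣ k} := by
  rw [PowerSeries.inv_eq_iff_mul_eq_one]
  · ext n
    cases n with
    | zero => simp [mul_sub, zero_pow, constantCoeff_indicator]
    | succ n =>
      simp only [coeff_one, if_false, mul_sub, mul_one, coeff_indicator,
        LinearMap.map_sub, reduceCtorEq]
      simp_rw [coeff_mul, coeff_X_pow, coeff_indicator, @boole_mul _ _ _ _]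
      erw [@sum_ite _ _ _ _ _ (fun _ => Classical.propDecidable _), sum_ite]
      simp_rw [@filter_filter _ _ _ _ _, sum_const_zero, add_zero, sum_const, nsmul_eq_mul, mul_one,
        sub_eq_iff_eq_add, zero_add]
      symm
      split_ifs with h
      · suffices #{a ∈ antidiagonal (n + 1) | i + 1 ∣ a.fst ∧ a.snd = i + 1} = 1 by
          simp only [Set.mem_setOf_eq]; convert congr_arg ((↑) : ℕ → α) this; norm_cast
        rw [card_eq_one]
        cases' h with p hp
        refine ⟨((i + 1) * (p - 1), i + 1), ?_⟩
        ext ⟨a₁, a₂⟩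
        simp only [mem_filter, Prod.mk_inj, Finset.HasAntidiagonal.mem_antidiagonal, mem_singleton]
        constructor
        · rintro ⟨a_left, ⟨a, rfl⟩, rfl⟩
          refine ⟨?_, rfl⟩
          rw [Nat.mul_sub_left_distrib, ← hp, ← a_left, mul_one, Nat.add_sub_cancel]
        · rintro ⟨rfl, rfl⟩
          match p with
          | 0 => rw [mul_zero] at hp; cases hp
          | p + 1 => rw [hp]; simp [mul_add]
      · suffices #{a ∈ antidiagonal (n + 1) | i + 1 ∣ a.fst ∧ a.snd = i + 1} = 0 by
          simp only [Set.mem_setOf_eq]; convert congr_arg ((↑) : ℕ → α) this; norm_cast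
        rw [card_eq_zero]
        apply eq_empty_of_forall_notMem
        simp only [Prod.forall, mem_filter, not_and, Finset.HasAntidiagonal.mem_antidiagonal]
        rintro _ h₁ h₂ ⟨a, rfl⟩ rfl
        apply h
        simp [← h₂]
  · simp [zero_pow]

-- The main workhorse.
theorem partialGF_prop (α : Type*) [CommSemiring α] (n : ℕ) (s : Finset ℕ) (hs : ∀ i ∈ s, 0 < i)
    (c : ℕ → Set ℕ) (hc : ∀ i, i ∉ s → 0 ∈ c i) :
    #{p : n.Partition | (∀ j, p.parts.count j ∈ c j) ∧ ∀ j ∈ p.parts, j ∈ s} =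
      coeff n (∏ i ∈ s, indicatorSeries α ((· * i) '' c i)) := by
  simp_rw [coeff_prod, coeff_indicator, prod_boole, sum_boole]
  apply congr_arg
  simp only [mem_univ, forall_true_left, not_and, not_forall, exists_prop,
    Set.mem_image, not_exists]
  set φ : (a : Nat.Partition n) →
    a ∈ filter (fun p ↦ (∀ (j : ℕ), Multiset.count j p.parts ∈ c j) ∧ ∀ j ∈ p.parts, j ∈ s) univ →
    ℕ →₀ ℕ := fun p _ => {
      toFun := fun i => Multiset.count i p.parts • i
      support := Finset.filter (fun i => i ≠ 0) p.parts.toFinset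
      mem_support_toFun := fun a => by
        simp only [smul_eq_mul, ne_eq, mul_eq_zero, Multiset.count_eq_zero]
        rw [not_or, not_not]
        simp only [Multiset.mem_toFinset, not_not, mem_filter] }
  refine Finset.card_bij φ ?_ ?_ ?_
  · intro a ha
    simp only [φ, not_forall, not_exists, not_and, exists_prop, mem_filter]
    rw [mem_finsuppAntidiag]
    dsimp only [ne_eq, smul_eq_mul, id_eq, eq_mpr_eq_cast, le_eq_subset, Finsupp.coe_mk]
    simp only [mem_univ, forall_true_left, not_and, not_forall, exists_prop,
      mem_filter, true_and] at ha
    refine ⟨⟨?_, fun i ↦ ?_⟩, fun i _ ↦ ⟨a.parts.count i, ha.1 i, rfl⟩⟩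
    · conv_rhs => simp [← a.parts_sum]
      rw [sum_multiset_count_of_subset _ s]
      · simp only [smul_eq_mul]
      · intro i
        simp only [Multiset.mem_toFinset, not_not, mem_filter]
        apply ha.2
    · simp only [ne_eq, Multiset.mem_toFinset, not_not, mem_filter, and_imp]
      exact fun hi _ ↦ ha.2 i hi
  · intro p₁ hp₁ p₂ hp₂ h
    apply Nat.Partition.ext
    simp only [true_and, mem_univ, mem_filter] at hp₁ hp₂
    ext i
    simp only [φ, ne_eq, Multiset.mem_toFinset, not_not, smul_eq_mul, Finsupp.mk.injEq] at h
    by_cases hi : i = 0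
    · rw [hi]
      rw [Multiset.count_eq_zero_of_notMem]
      · rw [Multiset.count_eq_zero_of_notMem]
        intro a; exact Nat.lt_irrefl 0 (hs 0 (hp₂.2 0 a))
      intro a; exact Nat.lt_irrefl 0 (hs 0 (hp₁.2 0 a))
    · rw [← mul_left_inj' hi]
      rw [funext_iff] at h
      exact h.2 i
  · simp only [φ, mem_filter, mem_finsuppAntidiag, mem_univ, exists_prop, true_and, and_assoc]
    rintro f ⟨hf, hf₃, hf₄⟩
    have hf' : f ∈ finsuppAntidiag s n := mem_finsuppAntidiag.mpr ⟨hf, hf₃⟩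
    simp only [mem_finsuppAntidiag] at hf'
    refine ⟨⟨∑ i ∈ s, Multiset.replicate (f i / i) i, ?_, ?_⟩, ?_, ?_, ?_⟩
    · intro i hi
      simp only [exists_prop, Multiset.mem_sum, mem_map, Function.Embedding.coeFn_mk] at hi
      rcases hi with ⟨t, ht, z⟩
      apply hs
      rwa [Multiset.eq_of_mem_replicate z]
    · simp_rw [Multiset.sum_sum, Multiset.sum_replicate, Nat.nsmul_eq_mul]
      rw [← hf'.1]
      refine sum_congr rfl fun i hi => Nat.div_mul_cancel ?_
      rcases hf₄ i hi with ⟨w, _, hw₂⟩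
      rw [← hw₂]
      exact dvd_mul_left _ _
    · intro i
      simp_rw [Multiset.count_sum', Multiset.count_replicate, sum_ite_eq']
      split_ifs with h
      · rcases hf₄ i h with ⟨w, hw₁, hw₂⟩
        rwa [← hw₂, Nat.mul_div_cancel _ (hs i h)]
      · exact hc _ h
    · intro i hi
      rw [Multiset.mem_sum] at hi
      rcases hi with ⟨j, hj₁, hj₂⟩
      rwa [Multiset.eq_of_mem_replicate hj₂]
    · ext i
      simp_rw [Multiset.count_sum', Multiset.count_replicate, sum_ite_eq']
      simp only [ne_eq, Multiset.mem_toFinset, not_not, smul_eq_mul, ite_mul,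
        zero_mul, Finsupp.coe_mk]
      split_ifs with h
      · apply Nat.div_mul_cancel
        rcases hf₄ i h with ⟨w, _, hw₂⟩
        apply Dvd.intro_left _ hw₂
      · apply symm
        rw [← Finsupp.notMem_support_iff]
        exact notMem_mono hf'.2 h


/-! ### ped and its partial generating function -/

/-- number of partitions of `m` with distinct even parts -/
def ped (m : ℕ) : ℕ := #{p : m.Partition | ∀ j ∈ p.parts, Even j → p.parts.count j = 1}

theorem e2_inj : Function.Injective (fun i : ℕ => 2 * (i + 1)) := fun x y h => by dsimp at h; omega

def e2 : ℕ ↪ ℕ := ⟨fun i => 2 * (i + 1), e2_inj⟩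

def pedGF2 (N : ℕ) : PowerSeries ℚ :=
  ∏ i ∈ range N,
    if Even (i + 1) then 1 + (X : PowerSeries ℚ) ^ (2 * (i + 1))
    else (1 - (X : PowerSeries ℚ) ^ (2 * (i + 1)))⁻¹

lemma one_add_X_pow (k : ℕ) (hk : k ≠ 0) :
    (1 + (X : PowerSeries ℚ) ^ k) = indicatorSeries ℚ {0, k} := by
  obtain ⟨i, rfl⟩ := Nat.exists_eq_succ_of_ne_zero hk
  exact two_series i

lemma inv_one_sub_X_pow (k : ℕ) (hk : k ≠ 0) :
    ((1 - (X : PowerSeries ℚ) ^ k)⁻¹) = indicatorSeries ℚ {m | k ∣ m} := by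
  obtain ⟨i, rfl⟩ := Nat.exists_eq_succ_of_ne_zero hk
  exact num_series' i

lemma pedGF2_eq_prod (N : ℕ) :
    pedGF2 N = ∏ j ∈ (range N).map e2,
      indicatorSeries ℚ ((· * j) '' (if 2 * 2 ∣ j then ({0, 1} : Set ℕ) else Set.univ)) := by
  rw [Finset.prod_map, pedGF2]
  apply prod_congr rfl
  intro i _
  rw [show e2 i = 2 * (i + 1) from rfl]
  by_cases he : Even (i + 1)
  · obtain ⟨c, hc⟩ := he
    rw [if_pos ⟨c, by omega⟩, if_pos ⟨c, by omega⟩, one_add_X_pow _ (by omega)]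
    rw [Set.image_pair]
    simp
  · rw [if_neg he, if_neg (fun ⟨c, hc⟩ => he ⟨c, by omega⟩),
      inv_one_sub_X_pow _ (by omega)]
    have hset : ((fun a => a * (2 * (i + 1))) '' Set.univ) = {m | 2 * (i + 1) ∣ m} := by
      ext k
      simp only [Set.image_univ, Set.mem_range, Set.mem_setOf_eq]
      constructor
      · rintro ⟨a, rfl⟩
        exact Dvd.intro_left a rfl
      · rintro ⟨a, rfl⟩
        exact ⟨a, mul_comm _ _⟩
    rw [hset]

lemma parts_le_sum {n : ℕ} (p : n.Partition) {j : ℕ} (hj : j ∈ p.parts) : j ≤ n := by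
  simpa [p.parts_sum] using Multiset.single_le_sum (fun _ _ => Nat.zero_le _) _ hj

lemma doubling_halving {s : Multiset ℕ} (h : ∀ j ∈ s, 2 ∣ j) :
    (s.map (fun j => j / 2)).map (fun j => 2 * j) = s := by
  rw [Multiset.map_map]
  rw [show ((fun j : ℕ => 2 * j) ∘ fun j : ℕ => j / 2) = fun j : ℕ => 2 * (j / 2) from rfl]
  calc s.map (fun j : ℕ => 2 * (j / 2)) = s.map id := by
        apply Multiset.map_congr rfl
        intro x hx
        exact Nat.mul_div_cancel' (h x hx)
    _ = s := Multiset.map_id _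

lemma card_even_ped (m N : ℕ) (hm : m ≤ N) :
    #{p : (2 * m).Partition |
        (∀ j, p.parts.count j ∈ (if 2 * 2 ∣ j then ({0, 1} : Set ℕ) else Set.univ)) ∧
        ∀ j ∈ p.parts, j ∈ (range N).map e2} = ped m := by
  rw [ped]
  have hinj : Function.Injective (fun j : ℕ => 2 * j) := fun x y h => by dsimp at h; omega
  refine card_bij' (fun p hp => ?_) (fun r hr => ?_) ?_ ?_ ?_ ?_
  · -- forward map
    simp only [mem_filter, mem_univ, true_and] at hp
    have heven : ∀ j ∈ p.parts, 2 ∣ j := by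
      intro j hj
      obtain ⟨i, -, hi⟩ := Finset.mem_map.mp (hp.2 j hj)
      exact ⟨i + 1, hi.symm⟩
    have hrec := doubling_halving heven
    have hsum : (p.parts.map (fun j => j / 2)).sum = m := by
      have h2 : 2 * (p.parts.map (fun j => j / 2)).sum = p.parts.sum := by
        conv_rhs => rw [← hrec]
        rw [show (fun j : ℕ => 2 * j) = fun j : ℕ => 2 * id j from rfl]
        rw [Multiset.sum_map_mul_left, Multiset.map_id]
      have h3 := p.parts_sum
      omega
    exact ⟨p.parts.map (fun j => j / 2), by
        intro i hi
        obtain ⟨x, hx, rfl⟩ := Multiset.mem_map.mp hi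
        obtain ⟨k, -, hk⟩ := Finset.mem_map.mp (hp.2 x hx)
        simp only [e2, Function.Embedding.coeFn_mk] at hk
        omega, hsum⟩
  · -- backward map
    exact ⟨r.parts.map (fun j => 2 * j), by
        intro i hi
        obtain ⟨x, hx, rfl⟩ := Multiset.mem_map.mp hi
        have := r.parts_pos hx
        omega, by
        rw [show (fun j : ℕ => 2 * j) = fun j : ℕ => 2 * id j from rfl]
        rw [Multiset.sum_map_mul_left, Multiset.map_id, r.parts_sum]⟩
  · -- forward maps into target
    intro p hp
    simp only [mem_filter, mem_univ, true_and] at hp ⊢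
    intro j hj hje
    have heven : ∀ x ∈ p.parts, 2 ∣ x := by
      intro x hx
      obtain ⟨i, -, hi⟩ := Finset.mem_map.mp (hp.2 x hx)
      exact ⟨i + 1, hi.symm⟩
    have hrec := doubling_halving heven
    have hcnt : Multiset.count (2 * j) p.parts
        = Multiset.count j (p.parts.map (fun j => j / 2)) := by
      conv_lhs => rw [← hrec]
      exact Multiset.count_map_eq_count' _ _ hinj j
    obtain ⟨c, rfl⟩ := hje
    have h1 := hp.1 (2 * (c + c))
    rw [if_pos ⟨c, by ring⟩] at h1
    simp only [Set.mem_insert_iff, Set.mem_singleton_iff] at h1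
    have hpos : 0 < Multiset.count (c + c) (p.parts.map (fun j => j / 2)) :=
      Multiset.count_pos.mpr hj
    omega
  · -- backward maps into source
    intro r hr
    simp only [mem_filter, mem_univ, true_and] at hr ⊢
    constructor
    · intro j
      split_ifs with h4
      · obtain ⟨c, rfl⟩ := h4
        have : (2 : ℕ) * 2 * c = 2 * (2 * c) := by ring
        rw [this, Multiset.count_map_eq_count' _ _ hinj (2 * c)]
        by_cases hmem : 2 * c ∈ r.parts
        · right
          exact hr (2 * c) hmem ⟨c, by ring⟩
        · left
          exact Multiset.count_eq_zero_of_notMem hmem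
      · exact Set.mem_univ _
    · intro j hj
      obtain ⟨x, hx, rfl⟩ := Multiset.mem_map.mp hj
      have hx1 : 0 < x := r.parts_pos hx
      have hx2 : x ≤ m := parts_le_sum r hx
      refine Finset.mem_map.mpr ⟨x - 1, Finset.mem_range.mpr (by omega), ?_⟩
      simp only [e2, Function.Embedding.coeFn_mk]
      omega
  · -- left inverse
    intro p hp
    simp only [mem_filter, mem_univ, true_and] at hp
    apply Nat.Partition.ext
    have heven : ∀ x ∈ p.parts, 2 ∣ x := by
      intro x hx
      obtain ⟨i, -, hi⟩ := Finset.mem_map.mp (hp.2 x hx)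
      exact ⟨i + 1, hi.symm⟩
    exact doubling_halving heven
  · -- right inverse
    intro r hr
    apply Nat.Partition.ext
    show (r.parts.map (fun j => 2 * j)).map (fun j => j / 2) = r.parts
    rw [Multiset.map_map]
    calc r.parts.map ((fun j : ℕ => j / 2) ∘ fun j : ℕ => 2 * j)
        = r.parts.map id := by
          apply Multiset.map_congr rfl
          intro x _
          show 2 * x / 2 = x
          omega
      _ = r.parts := Multiset.map_id _

lemma hpos_e2 (N : ℕ) : ∀ i ∈ (range N).map e2, 0 < i := by
  intro i hi
  obtain ⟨k, -, hk⟩ := Finset.mem_map.mp hi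
  simp only [e2, Function.Embedding.coeFn_mk] at hk
  omega

lemma hc_e2 : ∀ i : ℕ, i ∉ (range 0).map e2 →
    0 ∈ (if 2 * 2 ∣ i then ({0, 1} : Set ℕ) else Set.univ) := by
  intro i _
  split_ifs
  · exact Or.inl rfl
  · exact Set.mem_univ _

lemma coeff_pedGF2_even (n m N : ℕ) (hnm : n = 2 * m) (hm : m ≤ N) :
    coeff n (pedGF2 N) = (ped m : ℚ) := by
  subst hnm
  rw [pedGF2_eq_prod,
    ← partialGF_prop ℚ (2 * m) ((range N).map e2) (hpos_e2 N)
      (fun j => if 2 * 2 ∣ j then ({0, 1} : Set ℕ) else Set.univ)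
      (fun i _ => by split_ifs; exacts [Or.inl rfl, Set.mem_univ _])]
  rw [card_even_ped m N hm]

lemma coeff_pedGF2_odd (n N : ℕ) (hn : ¬ Even n) : coeff n (pedGF2 N) = 0 := by
  rw [pedGF2_eq_prod,
    ← partialGF_prop ℚ n ((range N).map e2) (hpos_e2 N)
      (fun j => if 2 * 2 ∣ j then ({0, 1} : Set ℕ) else Set.univ)
      (fun i _ => by split_ifs; exacts [Or.inl rfl, Set.mem_univ _])]
  norm_cast
  rw [Finset.card_eq_zero]
  apply Finset.eq_empty_of_forall_notMem
  intro p hp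
  rw [mem_filter] at hp
  apply hn
  rw [← p.parts_sum]
  rw [even_iff_two_dvd]
  apply Multiset.dvd_sum
  intro x hx
  obtain ⟨i, -, hi⟩ := Finset.mem_map.mp (hp.2.2 x hx)
  exact ⟨i + 1, hi.symm⟩

/-! ### algebraic identities -/

lemma prod_range_two_mul {M : Type*} [CommMonoid M] (f : ℕ → M) (L : ℕ) :
    ∏ i ∈ range (2 * L), f i = ∏ k ∈ range L, (f (2 * k) * f (2 * k + 1)) := by
  induction L with
  | zero => simp
  | succ L ih =>
    rw [Nat.mul_succ]
    rw [show 2 * L + 2 = (2 * L + 1) + 1 from rfl, prod_range_succ, prod_range_succ, ih,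
      prod_range_succ, mul_assoc]

lemma constCoeff_one_sub_X_pow (k : ℕ) (hk : k ≠ 0) :
    constantCoeff (1 - (X : PowerSeries ℚ) ^ k) ≠ 0 := by
  rw [map_sub, map_pow, constantCoeff_one, constantCoeff_X, zero_pow hk, sub_zero]
  exact one_ne_zero

lemma ped_algebra (M : ℕ) :
    (∏ i ∈ range (4 * M), (1 - (X : PowerSeries ℚ) ^ (2 * (i + 1)))) * pedGF2 (4 * M) =
      ∏ k ∈ range (2 * M), (1 - (X : PowerSeries ℚ) ^ (8 * (k + 1))) := by
  rw [pedGF2, ← prod_mul_distrib]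
  rw [show 4 * M = 2 * (2 * M) by ring, prod_range_two_mul]
  apply prod_congr rfl
  intro k _
  have ho : ¬ Even (2 * k + 1) := by simp [Nat.even_add_one, parity_simps]
  have he : Even (2 * k + 1 + 1) := by simp [Nat.even_add_one, parity_simps]
  rw [if_neg ho, if_pos he]
  rw [PowerSeries.mul_inv_cancel _ (constCoeff_one_sub_X_pow _ (by omega)), one_mul]
  have : (1 - (X : PowerSeries ℚ) ^ (2 * (2 * k + 1 + 1))) *
      (1 + (X : PowerSeries ℚ) ^ (2 * (2 * k + 1 + 1))) =
      1 - ((X : PowerSeries ℚ) ^ (2 * (2 * k + 1 + 1))) ^ 2 := by ring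
  rw [this, ← pow_mul]
  congr 1
  ring

lemma coeff_prod_stable (a n L : ℕ) (ha : 0 < a) (h : n + 1 ≤ L) :
    coeff n (∏ k ∈ range L, (1 - (X : PowerSeries ℚ) ^ (a * (k + 1)))) =
      coeff n (eulerProd a) := by
  rw [eulerProd, coeff_mk]
  rw [range_eq_Ico, ← Finset.prod_Ico_consecutive _ (Nat.zero_le (n + 1)) h, ← range_eq_Ico]
  rw [coeff_mul_prod_one_sub_of_lt_order]
  intro i hi
  rw [Finset.mem_Ico] at hi
  rw [order_X_pow]
  exact_mod_cast (by nlinarith : n < a * (i + 1))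

lemma coeff_mul_congr_left {f f' g : PowerSeries ℚ} {n : ℕ}
    (h : ∀ i, i ≤ n → coeff i f = coeff i f') :
    coeff n (f * g) = coeff n (f' * g) := by
  rw [coeff_mul, coeff_mul]
  apply Finset.sum_congr rfl
  rintro ⟨i, j⟩ hij
  rw [Finset.HasAntidiagonal.mem_antidiagonal] at hij
  rw [h i (by omega)]

lemma coeff_mul_congr_right {f g g' : PowerSeries ℚ} {n : ℕ}
    (h : ∀ i, i ≤ n → coeff i g = coeff i g') :
    coeff n (f * g) = coeff n (f * g') := by
  rw [mul_comm f g, mul_comm f g']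
  exact coeff_mul_congr_left h

/-! ### the power series P -/

def P : PowerSeries ℚ := PowerSeries.mk fun n => if Even n then (ped (n / 2) : ℚ) else 0

lemma constantCoeff_eulerProd_two : constantCoeff (eulerProd 2) ≠ 0 := by
  rw [← coeff_zero_eq_constantCoeff, eulerProd, coeff_mk, prod_range_one]
  simp [zero_pow]

lemma key : eulerProd 2 * P = eulerProd 8 := by
  ext n
  rw [coeff_mul_congr_left
    (fun i hi => (coeff_prod_stable 2 i (4 * (n + 1)) two_pos (by omega)).symm)]
  rw [coeff_mul_congr_right (g' := pedGF2 (4 * (n + 1))) (fun i hi => by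
    rw [P, coeff_mk]
    by_cases he : Even i
    · obtain ⟨c, hc⟩ := he
      rw [if_pos ⟨c, hc⟩, (coeff_pedGF2_even i (i / 2) (4 * (n + 1)) (by omega) (by omega))]
    · rw [if_neg he, (coeff_pedGF2_odd i _ he)])]
  rw [ped_algebra (n + 1)]
  exact coeff_prod_stable 8 n (2 * (n + 1)) (by norm_num) (by omega)

lemma euler_div_eq : eulerProd 8 * (eulerProd 2)⁻¹ = P := by
  rw [← key, mul_comm (eulerProd 2) P, mul_assoc,
    PowerSeries.mul_inv_cancel _ constantCoeff_eulerProd_two, mul_one]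

/-! ### rhoPed facts -/

lemma rhoPed_odd (n : ℕ) (hn : ¬ Even n) : rhoPed n = 0 := by
  rw [rhoPed]
  have : IsEmpty {p : n.Partition // ∃ m ∈ p.parts, p.parts.count m = 1 ∧
      (∀ x ∈ p.parts, x ≤ m) ∧ (p.parts.erase m).sum = m ∧
      ∀ x ∈ p.parts.erase m, Even x → (p.parts.erase m).count x = 1} := by
    constructor
    rintro ⟨p, M, hM, h1, h2, h3, h4⟩
    apply hn
    have hc := Multiset.cons_erase hM
    have hs : p.parts.sum = n := p.parts_sum
    rw [← hc, Multiset.sum_cons, h3] at hs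
    exact ⟨M, by omega⟩
  exact Nat.card_of_isEmpty

lemma rhoPed_zero : rhoPed 0 = 0 := by
  rw [rhoPed]
  have : IsEmpty {p : Nat.Partition 0 // ∃ m ∈ p.parts, p.parts.count m = 1 ∧
      (∀ x ∈ p.parts, x ≤ m) ∧ (p.parts.erase m).sum = m ∧
      ∀ x ∈ p.parts.erase m, Even x → (p.parts.erase m).count x = 1} := by
    constructor
    rintro ⟨p, M, hM, -⟩
    rw [p.partition_zero_parts] at hM
    exact absurd hM (Multiset.notMem_zero M)
  exact Nat.card_of_isEmpty

lemma ped_zero : ped 0 = 1 := by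
  rw [ped]
  rw [show ({p : Nat.Partition 0 | ∀ j ∈ p.parts, Even j → p.parts.count j = 1} : Finset _)
      = univ from ?_]
  · simp
  · apply Finset.eq_univ_of_forall
    intro p
    simp only [mem_filter, mem_univ, true_and]
    intro j hj
    rw [p.partition_zero_parts] at hj
    exact absurd hj (Multiset.notMem_zero j)

lemma witness_eq {m : ℕ} {p : (2 * m).Partition} {M : ℕ} (hM : M ∈ p.parts)
    (hsum : (p.parts.erase M).sum = M) : M = m := by
  have hc := Multiset.cons_erase hM
  have hs : p.parts.sum = 2 * m := p.parts_sum
  rw [← hc, Multiset.sum_cons, hsum] at hs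
  omega

lemma rhoPed_even (m : ℕ) (hm : m ≠ 0) : rhoPed (2 * m) + 1 = ped m := by
  rw [rhoPed, Nat.card_eq_fintype_card, Fintype.card_subtype, ped]
  have htriv : Nat.Partition.indiscrete m ∈
      ({p : m.Partition | ∀ j ∈ p.parts, Even j → p.parts.count j = 1} : Finset _) := by
    simp only [mem_filter, mem_univ, true_and]
    intro j hj
    rw [Nat.Partition.indiscrete_parts hm] at hj ⊢
    rw [Multiset.mem_singleton] at hj
    subst hj
    intro _
    simp
  have hcard : #({p : m.Partition | ∀ j ∈ p.parts, Even j → p.parts.count j = 1} : Finset _)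
      = #(({p : m.Partition | ∀ j ∈ p.parts, Even j → p.parts.count j = 1} : Finset _).erase
          (Nat.Partition.indiscrete m)) + 1 := by
    rw [Finset.card_erase_of_mem htriv]
    have hpos : 0 < #({p : m.Partition | ∀ j ∈ p.parts, Even j → p.parts.count j = 1} :
        Finset _) := Finset.card_pos.mpr ⟨_, htriv⟩
    omega
  rw [hcard]
  congr 1
  refine card_bij' (fun p hp => ⟨p.parts.erase m, fun {i} hi =>
      p.parts_pos (Multiset.mem_of_mem_erase hi), ?_⟩) (fun r hr => ⟨m ::ₘ r.parts, fun {i} hi => ?_, ?_⟩) ?_ ?_ ?_ ?_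
  · -- sum of erased parts
    simp only [mem_filter, mem_univ, true_and] at hp
    obtain ⟨M, hM, h1, h2, h3, h4⟩ := hp
    have hMm : M = m := witness_eq hM h3
    rw [hMm] at h3
    exact h3
  · -- positivity for backward
    rw [Multiset.mem_cons] at hi
    rcases hi with rfl | hi
    · omega
    · exact r.parts_pos hi
  · -- sum for backward
    rw [Multiset.sum_cons, r.parts_sum]
    omega
  · -- forward into target
    intro p hp
    simp only [mem_filter, mem_univ, true_and] at hp
    obtain ⟨M, hM, h1, h2, h3, h4⟩ := hp
    have hMm : M = m := witness_eq hM h3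
    rw [hMm] at hM h1 h2 h3 h4
    rw [Finset.mem_erase]
    constructor
    · intro heq
      have hparts : p.parts.erase m = {m} := by
        have := congrArg Nat.Partition.parts heq
        simpa [Nat.Partition.indiscrete_parts hm] using this
      have hce : Multiset.count m (p.parts.erase m) = 1 := by rw [hparts]; simp
      rw [Multiset.count_erase_self, h1] at hce
      omega
    · simp only [mem_filter, mem_univ, true_and]
      exact h4
  · -- backward into source
    intro r hr
    rw [Finset.mem_erase] at hr
    obtain ⟨hne, hr⟩ := hr
    simp only [mem_filter, mem_univ, true_and] at hr ⊢
    have hnotmem : m ∉ r.parts := by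
      intro hmem
      apply hne
      apply Nat.Partition.ext
      rw [Nat.Partition.indiscrete_parts hm]
      have hc := Multiset.cons_erase hmem
      have hs : r.parts.sum = m := r.parts_sum
      rw [← hc, Multiset.sum_cons] at hs
      have hrest : (r.parts.erase m).sum = 0 := by omega
      have hrest0 : r.parts.erase m = 0 := by
        apply Multiset.eq_zero_of_forall_notMem
        intro x hx
        have hxpos : 0 < x := r.parts_pos (Multiset.mem_of_mem_erase hx)
        have hxle : x ≤ (r.parts.erase m).sum :=
          Multiset.single_le_sum (fun _ _ => Nat.zero_le _) _ hx
        omega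
      rw [← hc, hrest0]
      rfl
    refine ⟨m, Multiset.mem_cons_self m _, ?_, ?_, ?_, ?_⟩
    · rw [Multiset.count_cons_self, Multiset.count_eq_zero_of_notMem hnotmem]
    · intro x hx
      rw [Multiset.mem_cons] at hx
      rcases hx with rfl | hx
      · exact le_refl x
      · exact parts_le_sum r hx
    · rw [Multiset.erase_cons_head, r.parts_sum]
    · rw [Multiset.erase_cons_head]
      exact hr
  · -- left inverse
    intro p hp
    simp only [mem_filter, mem_univ, true_and] at hp
    obtain ⟨M, hM, h1, h2, h3, h4⟩ := hp
    have hMm : M = m := witness_eq hM h3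
    rw [hMm] at hM
    apply Nat.Partition.ext
    exact Multiset.cons_erase hM
  · -- right inverse
    intro r hr
    apply Nat.Partition.ext
    exact Multiset.erase_cons_head m r.parts

end

end RhoPedAux

/-- `∑ ρ_ped(n) q^n = (q^8;q^8)_∞/(q^2;q^2)_∞ − 1/(1−q^2)`. -/
theorem rhoPed_generating_function :
    PowerSeries.mk (fun n => (rhoPed n : ℚ)) =
      eulerProd 8 * (eulerProd 2)⁻¹
        - (1 - (PowerSeries.X : PowerSeries ℚ) ^ 2)⁻¹ := by
  ext n
  rw [coeff_mk, map_sub, RhoPedAux.euler_div_eq,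
    RhoPedAux.inv_one_sub_X_pow 2 (by norm_num), RhoPedAux.P, coeff_mk,
    RhoPedAux.coeff_indicator]
  simp only [Set.mem_setOf_eq]
  by_cases he : Even n
  · rw [if_pos he, if_pos (even_iff_two_dvd.mp he)]
    by_cases h0 : n = 0
    · subst h0
      rw [RhoPedAux.rhoPed_zero]
      norm_num [RhoPedAux.ped_zero]
    · have h2 : n = 2 * (n / 2) := by obtain ⟨c, hc⟩ := he; omega
      have hq : (rhoPed (2 * (n / 2)) : ℚ) + 1 = (RhoPedAux.ped (n / 2) : ℚ) := by
        exact_mod_cast RhoPedAux.rhoPed_even (n / 2) (by omega)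
      conv_lhs => rw [h2]
      linarith
  · rw [if_neg he, if_neg (fun h => he (even_iff_two_dvd.mpr h)), RhoPedAux.rhoPed_odd n he]
    norm_num
end

section
/- Let ρ_ε(n) count partitions of n in which the largest part r appears exactly once and the remaining parts form a partition of r where every even part is strictly less than every odd part. Then ∑_{n≥0} ρ_ε(n) q^n = (1/(1−q^2)) · (1/(q^4;q^4)_∞ − 1), as formal power series. -/
open PowerSeries Finset

/-- `ρ_ε(n)`: the number of partitions of `n` whose largest part `m` occurs exactly once
and whose remaining parts form a partition of `m` in which every even part is strictly
less than every odd part. -/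
noncomputable def rhoEps (n : ℕ) : ℕ :=
  Nat.card {p : n.Partition // ∃ m ∈ p.parts, p.parts.count m = 1 ∧
    (∀ x ∈ p.parts, x ≤ m) ∧ (p.parts.erase m).sum = m ∧
    ∀ x ∈ p.parts.erase m, ∀ y ∈ p.parts.erase m, Even x → Odd y → x < y}

namespace RhoAux

noncomputable section

open scoped Classical

variable {α : Type*}

/-- A convenience constructor for the power series whose coefficients indicate a subset. -/
def indicatorSeries (α : Type*) [Semiring α] (s : Set ℕ) : PowerSeries α :=
  PowerSeries.mk fun n => if n ∈ s then 1 else 0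

theorem coeff_indicator (s : Set ℕ) [Semiring α] (n : ℕ) :
    coeff n (indicatorSeries α s) = if n ∈ s then 1 else 0 :=
  coeff_mk _ _

theorem constantCoeff_indicator (s : Set ℕ) [Semiring α] :
    constantCoeff (indicatorSeries α s) = if 0 ∈ s then 1 else 0 :=
  rfl

theorem num_series' [Field α] (i : ℕ) :
    (1 - (X : PowerSeries α) ^ (i + 1))⁻¹ = indicatorSeries α {k | i + 1 ∣ k} := by
  rw [PowerSeries.inv_eq_iff_mul_eq_one]
  · ext n
    cases n with
    | zero => simp [mul_sub, zero_pow, constantCoeff_indicator]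
    | succ n =>
      simp only [coeff_one, if_false, mul_sub, mul_one, coeff_indicator,
        LinearMap.map_sub, reduceCtorEq]
      simp_rw [coeff_mul, coeff_X_pow, coeff_indicator, @boole_mul _ _ _ _]
      erw [@sum_ite _ _ _ _ _ (fun _ => Classical.propDecidable _), sum_ite]
      simp_rw [@filter_filter _ _ _ _ _, sum_const_zero, add_zero, sum_const, nsmul_eq_mul, mul_one,
        sub_eq_iff_eq_add, zero_add]
      symm
      split_ifs with h
      · suffices #{a ∈ antidiagonal (n + 1) | i + 1 ∣ a.fst ∧ a.snd = i + 1} = 1 by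
          simp only [Set.mem_setOf_eq]; convert congr_arg ((↑) : ℕ → α) this; norm_cast
        rw [card_eq_one]
        cases' h with p hp
        refine ⟨((i + 1) * (p - 1), i + 1), ?_⟩
        ext ⟨a₁, a₂⟩
        simp only [mem_filter, Prod.mk.injEq, Finset.HasAntidiagonal.mem_antidiagonal, mem_singleton]
        constructor
        · rintro ⟨a_left, ⟨a, rfl⟩, rfl⟩
          refine ⟨?_, rfl⟩
          rw [Nat.mul_sub_left_distrib, ← hp, ← a_left, mul_one, Nat.add_sub_cancel]
        · rintro ⟨rfl, rfl⟩
          match p with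
          | 0 => rw [mul_zero] at hp; cases hp
          | p + 1 => rw [hp]; simp [mul_add]
      · suffices #{a ∈ antidiagonal (n + 1) | i + 1 ∣ a.fst ∧ a.snd = i + 1} = 0 by
          simp only [Set.mem_setOf_eq]; convert congr_arg ((↑) : ℕ → α) this; norm_cast
        rw [card_eq_zero]
        apply eq_empty_of_forall_notMem
        simp only [Prod.forall, mem_filter, not_and, Finset.HasAntidiagonal.mem_antidiagonal]
        rintro _ h₁ h₂ ⟨a, rfl⟩ rfl
        apply h
        simp [← h₂]
  · simp [zero_pow]

-- The main workhorse (copied from Archive.Wiedijk100Theorems.Partition).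
theorem partialGF_prop (α : Type*) [CommSemiring α] (n : ℕ) (s : Finset ℕ) (hs : ∀ i ∈ s, 0 < i)
    (c : ℕ → Set ℕ) (hc : ∀ i, i ∉ s → 0 ∈ c i) :
    #{p : n.Partition | (∀ j, p.parts.count j ∈ c j) ∧ ∀ j ∈ p.parts, j ∈ s} =
      coeff n (∏ i ∈ s, indicatorSeries α ((· * i) '' c i)) := by
  simp_rw [coeff_prod, coeff_indicator, prod_boole, sum_boole]
  apply congr_arg
  simp only [mem_univ, forall_true_left, not_and, not_forall, exists_prop,
    Set.mem_image, not_exists]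
  set φ : (a : Nat.Partition n) →
    a ∈ filter (fun p ↦ (∀ (j : ℕ), Multiset.count j p.parts ∈ c j) ∧ ∀ j ∈ p.parts, j ∈ s) univ →
    ℕ →₀ ℕ := fun p _ => {
      toFun := fun i => Multiset.count i p.parts • i
      support := Finset.filter (fun i => i ≠ 0) p.parts.toFinset
      mem_support_toFun := fun a => by
        simp only [smul_eq_mul, ne_eq, mul_eq_zero, Multiset.count_eq_zero]
        rw [not_or, not_not]
        simp only [Multiset.mem_toFinset, not_not, mem_filter] }
  refine Finset.card_bij φ ?_ ?_ ?_
  · intro a ha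
    simp only [φ, not_forall, not_exists, not_and, exists_prop, mem_filter]
    rw [mem_finsuppAntidiag]
    dsimp only [ne_eq, smul_eq_mul, id_eq, eq_mpr_eq_cast, le_eq_subset, Finsupp.coe_mk]
    simp only [mem_univ, forall_true_left, not_and, not_forall, exists_prop,
      mem_filter, true_and] at ha
    refine ⟨⟨?_, fun i ↦ ?_⟩, fun i _ ↦ ⟨a.parts.count i, ha.1 i, rfl⟩⟩
    · conv_rhs => simp [← a.parts_sum]
      rw [sum_multiset_count_of_subset _ s]
      · simp only [smul_eq_mul]
      · intro i
        simp only [Multiset.mem_toFinset, not_not, mem_filter]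
        apply ha.2
    · simp only [ne_eq, Multiset.mem_toFinset, not_not, mem_filter, and_imp]
      exact fun hi _ ↦ ha.2 i hi
  · intro p₁ hp₁ p₂ hp₂ h
    apply Nat.Partition.ext
    simp only [true_and, mem_univ, mem_filter] at hp₁ hp₂
    ext i
    simp only [φ, ne_eq, Multiset.mem_toFinset, not_not, smul_eq_mul, Finsupp.mk.injEq] at h
    by_cases hi : i = 0
    · rw [hi]
      rw [Multiset.count_eq_zero_of_notMem]
      · rw [Multiset.count_eq_zero_of_notMem]
        intro a; exact Nat.lt_irrefl 0 (hs 0 (hp₂.2 0 a))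
      intro a; exact Nat.lt_irrefl 0 (hs 0 (hp₁.2 0 a))
    · rw [← mul_left_inj' hi]
      rw [funext_iff] at h
      exact h.2 i
  · simp only [φ, mem_filter, mem_finsuppAntidiag, mem_univ, exists_prop, true_and, and_assoc]
    rintro f ⟨hf, hf₃, hf₄⟩
    have hf' : f ∈ finsuppAntidiag s n := mem_finsuppAntidiag.mpr ⟨hf, hf₃⟩
    simp only [mem_finsuppAntidiag] at hf'
    refine ⟨⟨∑ i ∈ s, Multiset.replicate (f i / i) i, ?_, ?_⟩, ?_, ?_, ?_⟩
    · intro i hi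
      simp only [exists_prop, Multiset.mem_sum, mem_map, Function.Embedding.coeFn_mk] at hi
      rcases hi with ⟨t, ht, z⟩
      apply hs
      rwa [Multiset.eq_of_mem_replicate z]
    · simp_rw [Multiset.sum_sum, Multiset.sum_replicate, Nat.nsmul_eq_mul]
      rw [← hf'.1]
      refine sum_congr rfl fun i hi => Nat.div_mul_cancel ?_
      rcases hf₄ i hi with ⟨w, _, hw₂⟩
      rw [← hw₂]
      exact dvd_mul_left _ _
    · intro i
      simp_rw [Multiset.count_sum', Multiset.count_replicate, sum_ite_eq']
      split_ifs with h
      · rcases hf₄ i h with ⟨w, hw₁, hw₂⟩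
        rwa [← hw₂, Nat.mul_div_cancel _ (hs i h)]
      · exact hc _ h
    · intro i hi
      rw [Multiset.mem_sum] at hi
      rcases hi with ⟨j, hj₁, hj₂⟩
      rwa [Multiset.eq_of_mem_replicate hj₂]
    · ext i
      simp_rw [Multiset.count_sum', Multiset.count_replicate, sum_ite_eq']
      simp only [ne_eq, Multiset.mem_toFinset, not_not, smul_eq_mul, ite_mul,
        zero_mul, Finsupp.coe_mk]
      split_ifs with h
      · apply Nat.div_mul_cancel
        rcases hf₄ i h with ⟨w, _, hw₂⟩
        apply Dvd.intro_left _ hw₂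
      · apply symm
        rw [← Finsupp.notMem_support_iff]
        exact notMem_mono hf'.2 h

/-- number of partitions of `n` into parts divisible by 4 -/
def p4 (n : ℕ) : ℕ := Nat.card {p : n.Partition // ∀ j ∈ p.parts, 4 ∣ j}

def mk4 : ℕ ↪ ℕ := ⟨fun i => 4 * (i + 1), fun x y h => by simpa using h⟩

/-- partial product of `(1 - X^{4k})⁻¹` -/
def G (m : ℕ) : PowerSeries ℚ := ∏ i ∈ range m, (1 - (X : PowerSeries ℚ) ^ (4 * (i + 1)))⁻¹

theorem p4_eq_coeff_G {n m : ℕ} (h : n < 4 * m) : (p4 n : ℚ) = coeff n (G m) := by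
  have h1 : #{p : n.Partition | (∀ j, p.parts.count j ∈ (Set.univ : Set ℕ)) ∧
      ∀ j ∈ p.parts, j ∈ (range m).map mk4} = coeff n (G m) := by
    rw [G]
    convert partialGF_prop ℚ n ((range m).map mk4) ?_ (fun _ => Set.univ) (fun _ _ => trivial)
      using 2
    · rw [Finset.prod_map]
      apply Finset.prod_congr rfl
      intro x _
      have : (4 * (x + 1)) = (4 * x + 3) + 1 := by ring
      have hmk : mk4 x = 4 * (x + 1) := rfl
      rw [hmk]
      rw [this, num_series']
      congr 1
      apply Set.ext
      intro k
      simp only [Set.image_univ, Set.mem_range, Set.mem_setOf_eq, dvd_iff_exists_eq_mul_left]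
      constructor
      · rintro ⟨c, rfl⟩; exact ⟨c, rfl⟩
      · rintro ⟨a, rfl⟩; exact ⟨a, rfl⟩
    · rintro i hi
      simp only [mem_map, mk4, Function.Embedding.coeFn_mk] at hi
      rcases hi with ⟨a, -, rfl⟩
      show 0 < 4 * (a + 1)
      positivity
  rw [← h1]
  rw [p4, Nat.card_eq_fintype_card, Fintype.card_subtype]
  norm_cast
  congr 1
  ext p
  simp only [Finset.mem_filter, Finset.mem_univ, true_and, Set.mem_univ, forall_const]
  constructor
  · intro hp j hj
    rcases hp j hj with ⟨c, hc⟩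
    simp only [mem_map, mem_range, mk4, Function.Embedding.coeFn_mk]
    have hjn : j ≤ n := by
      simpa [p.parts_sum] using Multiset.single_le_sum (fun _ _ => Nat.zero_le _) _ hj
    have hj0 : 0 < j := p.parts_pos hj
    have hc0 : 0 < c := by omega
    refine ⟨c - 1, ?_, by rw [hc]; show 4 * (c - 1 + 1) = 4 * c; omega⟩
    omega
  · intro hp j hj
    have := hp j hj
    simp only [mem_map, mem_range, mk4, Function.Embedding.coeFn_mk] at this
    rcases this with ⟨a, -, rfl⟩
    exact ⟨a + 1, rfl⟩

/-- partial product of `(1 - X^{4k})` -/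
def Q (m : ℕ) : PowerSeries ℚ := ∏ i ∈ range m, (1 - (X : PowerSeries ℚ) ^ (4 * (i + 1)))

theorem coeff_Q_stable {n m m' : ℕ} (h : n < 4 * (m + 1)) (h' : m ≤ m') :
    coeff n (Q m') = coeff n (Q m) := by
  rw [Q, Q, ← Finset.prod_range_mul_prod_Ico _ h']
  exact coeff_mul_prod_one_sub_of_lt_order n _ _ _ (fun i hi => by
    rw [order_X_pow]
    have : m ≤ i := (Finset.mem_Ico.mp hi).1
    exact_mod_cast lt_of_lt_of_le h (by push_cast; exact_mod_cast Nat.mul_le_mul_left 4 (by omega)))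

theorem QG_eq_one (m : ℕ) : Q m * G m = 1 := by
  rw [Q, G, ← Finset.prod_mul_distrib]
  rw [← Finset.prod_const_one (s := range m)]
  apply Finset.prod_congr rfl
  intro i _
  apply PowerSeries.mul_inv_cancel
  simp [zero_pow]

theorem eulerProd_mul_p4 : eulerProd 4 * PowerSeries.mk (fun n => (p4 n : ℚ)) = 1 := by
  ext n
  rw [coeff_mul]
  have : ∀ ij ∈ antidiagonal n, coeff ij.1 (eulerProd 4) * coeff ij.2 (mk fun n => (p4 n : ℚ))
      = coeff ij.1 (Q (n+1)) * coeff ij.2 (G (n+1)) := by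
    rintro ⟨i, j⟩ hij
    rw [Finset.HasAntidiagonal.mem_antidiagonal] at hij
    have hi : i ≤ n := by omega
    have hj : j ≤ n := by omega
    congr 1
    · rw [eulerProd, coeff_mk]
      have : coeff i (Q (n + 1)) = coeff i (Q (i + 1)) :=
        coeff_Q_stable (by omega) (by omega)
      rw [this, Q]
    · rw [coeff_mk, ← p4_eq_coeff_G (by omega)]
  rw [Finset.sum_congr rfl this, ← coeff_mul, QG_eq_one]

/-- `EO q`: every even part of `q` is less than every odd part. -/
def EO {m : ℕ} (q : Nat.Partition m) : Prop :=
  ∀ x ∈ q.parts, ∀ y ∈ q.parts, Even x → Odd y → x < y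

def dcount (m : ℕ) : ℕ := Nat.card {q : Nat.Partition m // EO q}

def ecount (m : ℕ) : ℕ := Nat.card {q : Nat.Partition m // ∀ x ∈ q.parts, 2 ∣ x}

/-! ### max even part, min odd part -/

def maxE (s : Multiset ℕ) : ℕ := (s.filter (fun x => Even x)).toFinset.sup id

def minO (s : Multiset ℕ) : ℕ := sInf {x | x ∈ s ∧ ¬ Even x}

lemma le_maxE {s : Multiset ℕ} {x : ℕ} (hx : x ∈ s) (he : Even x) : x ≤ maxE s :=
  Finset.le_sup (f := id) (by rw [Multiset.mem_toFinset, Multiset.mem_filter]; exact ⟨hx, he⟩)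

lemma maxE_mem {s : Multiset ℕ} (h : s.filter (fun x => Even x) ≠ 0) :
    maxE s ∈ s ∧ Even (maxE s) := by
  have hne : (s.filter (fun x => Even x)).toFinset.Nonempty := by
    rwa [Multiset.toFinset_nonempty]
  obtain ⟨b, hb, hbs⟩ := Finset.exists_mem_eq_sup _ hne id
  rw [Multiset.mem_toFinset, Multiset.mem_filter] at hb
  rw [maxE, hbs]
  exact hb

lemma maxE_unique {s : Multiset ℕ} {e : ℕ} (h : s.filter (fun x => Even x) ≠ 0)
    (he : e ∈ s) (hev : Even e) (hb : ∀ x ∈ s, Even x → x ≤ e) : maxE s = e :=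
  le_antisymm (hb _ (maxE_mem h).1 (maxE_mem h).2) (le_maxE he hev)

lemma minO_mem {s : Multiset ℕ} (h : s.filter (fun x => ¬ Even x) ≠ 0) :
    minO s ∈ s ∧ ¬ Even (minO s) := by
  have hne : {x | x ∈ s ∧ ¬ Even x}.Nonempty := by
    obtain ⟨a, ha⟩ := Multiset.exists_mem_of_ne_zero h
    rw [Multiset.mem_filter] at ha
    exact ⟨a, ha⟩
  exact Nat.sInf_mem hne

lemma minO_le {s : Multiset ℕ} {x : ℕ} (hx : x ∈ s) (he : ¬ Even x) : minO s ≤ x :=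
  Nat.sInf_le ⟨hx, he⟩

lemma minO_unique {s : Multiset ℕ} {o : ℕ} (h : s.filter (fun x => ¬ Even x) ≠ 0)
    (ho : o ∈ s) (hodd : ¬ Even o) (hb : ∀ x ∈ s, ¬ Even x → o ≤ x) : minO s = o :=
  le_antisymm (minO_le ho hodd) (hb _ (minO_mem h).1 (minO_mem h).2)

/-! ### generic card splitting -/

lemma card_split {α : Type*} [Finite α] (P Q : α → Prop) :
    Nat.card {x // P x} = Nat.card {x // P x ∧ Q x} + Nat.card {x // P x ∧ ¬ Q x} := by
  rw [← Nat.card_sum]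
  apply Nat.card_congr
  exact ((Equiv.sumCompl (fun x : {a // P a} => Q x.1)).symm.trans
    (Equiv.sumCongr (Equiv.subtypeSubtypeEquivSubtypeInter P Q)
      (Equiv.subtypeSubtypeEquivSubtypeInter P (fun x => ¬ Q x))))

/-! ### basic facts about rhoEps -/

lemma sum_erase_of_mem {s : Multiset ℕ} {a : ℕ} (h : a ∈ s) : a + (s.erase a).sum = s.sum := by
  conv_rhs => rw [← Multiset.cons_erase h]
  rw [Multiset.sum_cons]

lemma rhoEps_not_even {n : ℕ} (h : ¬ 2 ∣ n) : rhoEps n = 0 := by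
  rw [rhoEps]
  have : IsEmpty {p : n.Partition // ∃ m ∈ p.parts, p.parts.count m = 1 ∧
      (∀ x ∈ p.parts, x ≤ m) ∧ (p.parts.erase m).sum = m ∧
      ∀ x ∈ p.parts.erase m, ∀ y ∈ p.parts.erase m, Even x → Odd y → x < y} := by
    constructor
    rintro ⟨p, r, hr, -, -, hsum, -⟩
    have h1 := sum_erase_of_mem hr
    rw [hsum, p.parts_sum] at h1
    exact h (⟨r, by omega⟩)
  exact Nat.card_of_isEmpty

/-- the key reformulation: for partitions of `2*m`, the witness must be `m` itself. -/
lemma rho_eq_card (m : ℕ) :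
    rhoEps (2 * m) = Nat.card {p : (2 * m).Partition //
      p.parts.count m = 1 ∧
      ∀ x ∈ p.parts.erase m, ∀ y ∈ p.parts.erase m, Even x → Odd y → x < y} := by
  rw [rhoEps]
  apply Nat.card_congr
  apply Equiv.subtypeEquivRight
  intro p
  constructor
  · rintro ⟨r, hr, hcount, -, hsum, hEO⟩
    have h1 := sum_erase_of_mem hr
    rw [hsum, p.parts_sum] at h1
    have : r = m := by omega
    subst this
    exact ⟨hcount, hEO⟩
  · rintro ⟨hcount, hEO⟩
    have hm : m ∈ p.parts := Multiset.count_pos.mp (by omega)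
    have h1 := sum_erase_of_mem hm
    rw [p.parts_sum] at h1
    have hsum : (p.parts.erase m).sum = m := by omega
    refine ⟨m, hm, hcount, ?_, hsum, hEO⟩
    intro x hx
    rcases eq_or_ne x m with rfl | hne
    · exact le_rfl
    · have : x ∈ p.parts.erase m := (Multiset.mem_erase_of_ne hne).mpr hx
      calc x ≤ (p.parts.erase m).sum :=
              Multiset.single_le_sum (fun _ _ => Nat.zero_le _) _ this
        _ = m := hsum

lemma rho_zero : rhoEps 0 = 0 := by
  rw [rhoEps]
  have : IsEmpty {p : Nat.Partition 0 // ∃ m ∈ p.parts, p.parts.count m = 1 ∧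
      (∀ x ∈ p.parts, x ≤ m) ∧ (p.parts.erase m).sum = m ∧
      ∀ x ∈ p.parts.erase m, ∀ y ∈ p.parts.erase m, Even x → Odd y → x < y} := by
    constructor
    rintro ⟨p, r, hr, -⟩
    rw [p.partition_zero_parts] at hr
    exact absurd hr (Multiset.notMem_zero r)
  exact Nat.card_of_isEmpty

lemma rho_two_mul (m : ℕ) : rhoEps (2 * m) + 1 = dcount m := by
  rcases Nat.eq_zero_or_pos m with rfl | hm
  · -- m = 0
    have h0 : rhoEps 0 = 0 := rho_zero
    rw [mul_zero, h0, dcount]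
    have hone : Nat.card {q : Nat.Partition 0 // EO q} = 1 := by
      rw [Nat.card_eq_one_iff_unique]
      constructor
      · constructor
        rintro ⟨p, -⟩ ⟨q, -⟩
        apply Subtype.ext
        apply Nat.Partition.ext
        rw [p.partition_zero_parts, q.partition_zero_parts]
      · exact ⟨default, by rw [EO, (default : Nat.Partition 0).partition_zero_parts]; simp⟩
    omega
  · -- m ≥ 1
    rw [rho_eq_card]
    rw [dcount, card_split (fun q : Nat.Partition m => EO q) (fun q => m ∈ q.parts)]
    have e1 : Nat.card {p : (2 * m).Partition //
        p.parts.count m = 1 ∧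
        ∀ x ∈ p.parts.erase m, ∀ y ∈ p.parts.erase m, Even x → Odd y → x < y} =
        Nat.card {q : Nat.Partition m // EO q ∧ ¬ m ∈ q.parts} := by
      apply Nat.card_congr
      refine ⟨?_, ?_, ?_, ?_⟩
      · rintro ⟨p, h1, h2⟩
        have hm : m ∈ p.parts := Multiset.count_pos.mp (by omega)
        have hsum : (p.parts.erase m).sum = m := by
          have := sum_erase_of_mem hm; rw [p.parts_sum] at this; omega
        refine ⟨⟨p.parts.erase m, fun hi => p.parts_pos (Multiset.mem_of_mem_erase hi), hsum⟩,
          h2, ?_⟩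
        show ¬ m ∈ p.parts.erase m
        rw [← Multiset.count_pos, Multiset.count_erase_self]
        omega
      · rintro ⟨q, hEO, hnm⟩
        refine ⟨⟨m ::ₘ q.parts, ?_, by rw [Multiset.sum_cons, q.parts_sum]; ring⟩, ?_, ?_⟩
        · intro i hi
          rcases Multiset.mem_cons.mp hi with rfl | hi
          · exact hm
          · exact q.parts_pos hi
        · show Multiset.count m (m ::ₘ q.parts) = 1
          rw [Multiset.count_cons_self, Multiset.count_eq_zero.mpr hnm]
        · show ∀ x ∈ (m ::ₘ q.parts).erase m, ∀ y ∈ (m ::ₘ q.parts).erase m, _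
          rw [Multiset.erase_cons_head]
          exact hEO
      · rintro ⟨p, h1, h2⟩
        apply Subtype.ext
        apply Nat.Partition.ext
        show m ::ₘ p.parts.erase m = p.parts
        exact Multiset.cons_erase (Multiset.count_pos.mp (by omega))
      · rintro ⟨q, hEO, hnm⟩
        apply Subtype.ext
        apply Nat.Partition.ext
        show (m ::ₘ q.parts).erase m = q.parts
        exact Multiset.erase_cons_head m q.parts
    have e2 : Nat.card {q : Nat.Partition m // EO q ∧ m ∈ q.parts} = 1 := by
      rw [Nat.card_eq_one_iff_unique]
      have parts_eq : ∀ q : Nat.Partition m, m ∈ q.parts → q.parts = {m} := by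
        intro q hq
        have hsum := sum_erase_of_mem hq
        rw [q.parts_sum] at hsum
        have : (q.parts.erase m).sum = 0 := by omega
        have hz : q.parts.erase m = 0 := by
          apply Multiset.eq_zero_of_forall_notMem
          intro x hx
          have hx0 := q.parts_pos (Multiset.mem_of_mem_erase hx)
          have : x ≤ (q.parts.erase m).sum :=
            Multiset.single_le_sum (fun _ _ => Nat.zero_le _) _ hx
          omega
        have := Multiset.cons_erase hq
        rw [hz] at this
        exact this.symm
      constructor
      · constructor
        rintro ⟨p, -, hp⟩ ⟨q, -, hq⟩
        apply Subtype.ext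
        apply Nat.Partition.ext
        rw [parts_eq p hp, parts_eq q hq]
      · refine ⟨⟨Nat.Partition.indiscrete m, ?_, ?_⟩⟩
        · intro x hx y hy hx2 hy2
          rw [Nat.Partition.indiscrete_parts (by omega)] at hx hy
          rw [Multiset.mem_singleton] at hx hy
          subst hx; subst hy
          exact absurd hx2 (Nat.not_even_iff_odd.mpr hy2)
        · rw [Nat.Partition.indiscrete_parts (by omega)]
          exact Multiset.mem_singleton_self m
    rw [e1, e2]
    omega

/-! ### the bijection for the recurrence -/

def fwd {m : ℕ} (q : Nat.Partition m) : Nat.Partition (m + 1) :=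
  if h : q.parts.filter (fun x => Even x) ≠ 0 then
    { parts := (maxE q.parts + 1) ::ₘ q.parts.erase (maxE q.parts)
      parts_pos := by
        intro i hi
        rcases Multiset.mem_cons.mp hi with rfl | hi
        · omega
        · exact q.parts_pos (Multiset.mem_of_mem_erase hi)
      parts_sum := by
        have h1 := sum_erase_of_mem (maxE_mem h).1
        rw [q.parts_sum] at h1
        have h2 : maxE q.parts ≤ m := by omega
        rw [Multiset.sum_cons]
        omega }
  else
    { parts := 1 ::ₘ q.parts
      parts_pos := by
        intro i hi
        rcases Multiset.mem_cons.mp hi with rfl | hi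
        · omega
        · exact q.parts_pos hi
      parts_sum := by rw [Multiset.sum_cons, q.parts_sum]; omega }

def bwd {m : ℕ} (p : Nat.Partition (m + 1)) : Nat.Partition m :=
  if h : p.parts.filter (fun x => ¬ Even x) ≠ 0 then
    Nat.Partition.ofSums m ((minO p.parts - 1) ::ₘ p.parts.erase (minO p.parts)) (by
      have h1 := sum_erase_of_mem (minO_mem h).1
      rw [p.parts_sum] at h1
      have ho : 0 < minO p.parts := p.parts_pos (minO_mem h).1
      rw [Multiset.sum_cons]
      omega)
  else default

lemma erase_filter_ne_zero {m : ℕ} (p : Nat.Partition m) (a : ℕ) :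
    (p.parts.erase a).filter (· ≠ 0) = p.parts.erase a :=
  Multiset.filter_eq_self.mpr fun x hx => (p.parts_pos (Multiset.mem_of_mem_erase hx)).ne'

lemma fwd_parts_pos {m : ℕ} {q : Nat.Partition m} (h : q.parts.filter (fun x => Even x) ≠ 0) :
    (fwd q).parts = (maxE q.parts + 1) ::ₘ q.parts.erase (maxE q.parts) := by
  rw [fwd, dif_pos h]

lemma fwd_parts_neg {m : ℕ} {q : Nat.Partition m} (h : ¬ q.parts.filter (fun x => Even x) ≠ 0) :
    (fwd q).parts = 1 ::ₘ q.parts := by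
  rw [fwd, dif_neg h]

lemma bwd_parts {m : ℕ} {p : Nat.Partition (m + 1)} (h : p.parts.filter (fun x => ¬ Even x) ≠ 0) :
    (bwd p).parts =
      ((minO p.parts - 1) ::ₘ p.parts.erase (minO p.parts)).filter (· ≠ 0) := by
  rw [bwd, dif_pos h, Nat.Partition.ofSums_parts]

lemma fwd_good {m : ℕ} {q : Nat.Partition m} (hq : EO q) :
    EO (fwd q) ∧ (fwd q).parts.filter (fun x => ¬ Even x) ≠ 0 := by
  by_cases h : q.parts.filter (fun x => Even x) ≠ 0
  · have he1 : maxE q.parts ∈ q.parts := (maxE_mem h).1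
    have he2 : Even (maxE q.parts) := (maxE_mem h).2
    have hodd : ¬ Even (maxE q.parts + 1) := by simp [Nat.even_add_one, he2]
    constructor
    · intro x hx y hy hex hoy
      rw [fwd_parts_pos h] at hx hy
      have hxne : x ≠ maxE q.parts + 1 := fun hc => hodd (hc ▸ hex)
      have hx' : x ∈ q.parts.erase (maxE q.parts) := by
        rcases Multiset.mem_cons.mp hx with rfl | hx'
        · exact absurd rfl hxne
        · exact hx'
      have hxq : x ∈ q.parts := Multiset.mem_of_mem_erase hx'
      have hxe : x ≤ maxE q.parts := le_maxE hxq hex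
      rcases Multiset.mem_cons.mp hy with rfl | hy'
      · omega
      · exact hq x hxq y (Multiset.mem_of_mem_erase hy') hex hoy
    · intro h0
      rw [fwd_parts_pos h, Multiset.filter_eq_nil] at h0
      exact h0 (maxE q.parts + 1) (Multiset.mem_cons_self _ _) hodd
  · have h' : ∀ a ∈ q.parts, ¬ Even a := by
      rw [not_not, Multiset.filter_eq_nil] at h
      exact h
    constructor
    · intro x hx y hy hex hoy
      rw [fwd_parts_neg h] at hx
      rcases Multiset.mem_cons.mp hx with rfl | hx'
      · exact absurd hex (by decide)
      · exact absurd hex (h' x hx')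
    · intro h0
      rw [fwd_parts_neg h, Multiset.filter_eq_nil] at h0
      exact h0 1 (Multiset.mem_cons_self _ _) (by decide)

lemma bwd_EO {m : ℕ} {p : Nat.Partition (m + 1)} (hp : EO p)
    (h : p.parts.filter (fun x => ¬ Even x) ≠ 0) : EO (bwd p) := by
  have ho1 : minO p.parts ∈ p.parts := (minO_mem h).1
  have ho2 : ¬ Even (minO p.parts) := (minO_mem h).2
  have hop : 0 < minO p.parts := p.parts_pos ho1
  intro x hx y hy hex hoy
  rw [bwd_parts h, Multiset.mem_filter] at hx hy
  have hyo : y ∈ p.parts.erase (minO p.parts) := by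
    rcases Multiset.mem_cons.mp hy.1 with rfl | hy'
    · exfalso
      have : Even (minO p.parts - 1) := Nat.Odd.sub_odd (Nat.not_even_iff_odd.mp ho2) odd_one
      exact (Nat.not_odd_iff_even.mpr this) hoy
    · exact hy'
  have hyp : y ∈ p.parts := Multiset.mem_of_mem_erase hyo
  have hoy' : minO p.parts ≤ y := minO_le hyp (Nat.not_even_iff_odd.mpr hoy)
  rcases Multiset.mem_cons.mp hx.1 with rfl | hx'
  · omega
  · exact hp x (Multiset.mem_of_mem_erase hx') y hyp hex hoy

lemma bwd_fwd {m : ℕ} {q : Nat.Partition m} (hq : EO q) : bwd (fwd q) = q := by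
  have hOs := (fwd_good hq).2
  apply Nat.Partition.ext
  rw [bwd_parts hOs]
  by_cases h : q.parts.filter (fun x => Even x) ≠ 0
  · have he1 : maxE q.parts ∈ q.parts := (maxE_mem h).1
    have he2 : Even (maxE q.parts) := (maxE_mem h).2
    have hodd : ¬ Even (maxE q.parts + 1) := by simp [Nat.even_add_one, he2]
    have hmin : minO (fwd q).parts = maxE q.parts + 1 := by
      apply minO_unique hOs
      · rw [fwd_parts_pos h]; exact Multiset.mem_cons_self _ _
      · exact hodd
      · intro x hx hxo
        rw [fwd_parts_pos h] at hx
        rcases Multiset.mem_cons.mp hx with rfl | hx'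
        · exact le_rfl
        · have := hq (maxE q.parts) he1 x (Multiset.mem_of_mem_erase hx') he2
            (Nat.not_even_iff_odd.mp hxo)
          omega
    rw [hmin, fwd_parts_pos h, Multiset.erase_cons_head, Nat.add_sub_cancel,
      Multiset.cons_erase he1]
    exact Multiset.filter_eq_self.mpr fun x hx => (q.parts_pos hx).ne'
  · have hmin : minO (fwd q).parts = 1 := by
      apply minO_unique hOs
      · rw [fwd_parts_neg h]; exact Multiset.mem_cons_self _ _
      · decide
      · intro x hx _
        exact (fwd q).parts_pos hx
    rw [hmin, fwd_parts_neg h, Multiset.erase_cons_head]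
    show ((1 - 1) ::ₘ q.parts).filter (· ≠ 0) = q.parts
    rw [(by norm_num : (1 : ℕ) - 1 = 0), Multiset.filter_cons_of_neg _ (by simp)]
    exact Multiset.filter_eq_self.mpr fun x hx => (q.parts_pos hx).ne'

lemma fwd_bwd {m : ℕ} {p : Nat.Partition (m + 1)} (hp : EO p)
    (h : p.parts.filter (fun x => ¬ Even x) ≠ 0) : fwd (bwd p) = p := by
  have ho1 : minO p.parts ∈ p.parts := (minO_mem h).1
  have ho2 : ¬ Even (minO p.parts) := (minO_mem h).2
  have hop : 0 < minO p.parts := p.parts_pos ho1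
  apply Nat.Partition.ext
  rcases eq_or_ne (minO p.parts) 1 with ho1' | ho1'
  · -- minimal odd part is 1
    have hB : (bwd p).parts = p.parts.erase 1 := by
      rw [bwd_parts h, ho1']
      rw [(by norm_num : (1 : ℕ) - 1 = 0), Multiset.filter_cons_of_neg _ (by simp)]
      exact erase_filter_ne_zero p 1
    have hno : ¬ (bwd p).parts.filter (fun x => Even x) ≠ 0 := by
      rw [not_not, Multiset.filter_eq_nil]
      intro x hx hex
      rw [hB] at hx
      have hxp : x ∈ p.parts := Multiset.mem_of_mem_erase hx
      have h1 : x < 1 := by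
        have := hp x hxp (minO p.parts) ho1 hex (Nat.not_even_iff_odd.mp ho2)
        omega
      have := p.parts_pos hxp
      omega
    rw [fwd_parts_neg hno, hB]
    exact Multiset.cons_erase (by rw [ho1'] at ho1; exact ho1)
  · -- minimal odd part is at least 3
    have ho3 : 2 ≤ minO p.parts := by omega
    have hB : (bwd p).parts = (minO p.parts - 1) ::ₘ p.parts.erase (minO p.parts) := by
      rw [bwd_parts h]
      rw [Multiset.filter_cons_of_pos _ (by omega), erase_filter_ne_zero]
    have hoe : Even (minO p.parts - 1) := Nat.Odd.sub_odd (Nat.not_even_iff_odd.mp ho2) odd_one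
    have hEs : (bwd p).parts.filter (fun x => Even x) ≠ 0 := by
      intro h0
      rw [Multiset.filter_eq_nil] at h0
      exact h0 (minO p.parts - 1) (by rw [hB]; exact Multiset.mem_cons_self _ _) hoe
    have hmax : maxE (bwd p).parts = minO p.parts - 1 := by
      apply maxE_unique hEs
      · rw [hB]; exact Multiset.mem_cons_self _ _
      · exact hoe
      · intro x hx hex
        rw [hB] at hx
        rcases Multiset.mem_cons.mp hx with rfl | hx'
        · exact le_rfl
        · have := hp x (Multiset.mem_of_mem_erase hx') (minO p.parts) ho1 hex
            (Nat.not_even_iff_odd.mp ho2)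
          omega
    rw [fwd_parts_pos hEs, hmax, hB, Multiset.erase_cons_head]
    rw [(by omega : minO p.parts - 1 + 1 = minO p.parts), Multiset.cons_erase ho1]

lemma dcount_succ (m : ℕ) : dcount (m + 1) = dcount m + ecount (m + 1) := by
  rw [dcount, card_split (fun q : Nat.Partition (m + 1) => EO q)
    (fun q => q.parts.filter (fun x => ¬ Even x) ≠ 0)]
  have eOdd : Nat.card {q : Nat.Partition (m + 1) //
      EO q ∧ q.parts.filter (fun x => ¬ Even x) ≠ 0} = dcount m := by
    rw [dcount]
    apply Nat.card_congr
    exact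
      { toFun := fun x => ⟨bwd x.1, bwd_EO x.2.1 x.2.2⟩
        invFun := fun q => ⟨fwd q.1, (fwd_good q.2).1, (fwd_good q.2).2⟩
        left_inv := fun x => Subtype.ext (fwd_bwd x.2.1 x.2.2)
        right_inv := fun q => Subtype.ext (bwd_fwd q.2) }
  have eEven : Nat.card {q : Nat.Partition (m + 1) //
      EO q ∧ ¬ q.parts.filter (fun x => ¬ Even x) ≠ 0} = ecount (m + 1) := by
    rw [ecount]
    apply Nat.card_congr
    apply Equiv.subtypeEquivRight
    intro q
    rw [not_not, Multiset.filter_eq_nil]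
    constructor
    · rintro ⟨-, hall⟩ x hx
      have := hall x hx
      rw [not_not] at this
      exact this.two_dvd
    · intro hall
      have hev : ∀ x ∈ q.parts, Even x := by
        intro x hx
        obtain ⟨c, hc⟩ := hall x hx
        exact ⟨c, by omega⟩
      exact ⟨fun x hx y hy hex hoy => absurd (hev y hy) (Nat.not_even_iff_odd.mpr hoy),
        fun x hx => not_not_intro (hev x hx)⟩
  rw [eOdd, eEven]

lemma ecount_eq_p4 (m : ℕ) : ecount m = p4 (2 * m) := by
  rw [ecount, p4]
  apply Nat.card_congr
  refine ⟨?_, ?_, ?_, ?_⟩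
  · rintro ⟨q, hq⟩
    refine ⟨⟨q.parts.map (fun x => 2 * x), ?_, ?_⟩, ?_⟩
    · intro i hi
      rw [Multiset.mem_map] at hi
      obtain ⟨x, hx, rfl⟩ := hi
      have := q.parts_pos hx
      omega
    · rw [show (fun x => 2 * x) = (fun x => 2 * id x) from rfl, Multiset.sum_map_mul_left,
        Multiset.map_id, q.parts_sum]
    · intro j hj
      rw [Multiset.mem_map] at hj
      obtain ⟨x, hx, rfl⟩ := hj
      obtain ⟨c, hc⟩ := hq x hx
      exact ⟨c, by omega⟩
  · rintro ⟨p, hp⟩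
    refine ⟨⟨p.parts.map (fun x => x / 2), ?_, ?_⟩, ?_⟩
    · intro i hi
      rw [Multiset.mem_map] at hi
      obtain ⟨x, hx, rfl⟩ := hi
      obtain ⟨c, hc⟩ := hp x hx
      have := p.parts_pos hx
      omega
    · have h2 : (p.parts.map (fun x => 2 * (x / 2))).sum = (p.parts.map id).sum := by
        apply congrArg Multiset.sum
        apply Multiset.map_congr rfl
        intro x hx
        obtain ⟨c, hc⟩ := hp x hx
        simp only [id]
        omega
      rw [Multiset.map_id] at h2
      have h3 : (2 : ℕ) * (p.parts.map (fun x => x / 2)).sum = 2 * m := by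
        rw [show (fun x : ℕ => x / 2) = (fun x => id x / 2) from rfl, ← Multiset.sum_map_mul_left]
        simp only [id]
        rw [h2, p.parts_sum]
      omega
    · intro j hj
      rw [Multiset.mem_map] at hj
      obtain ⟨x, hx, rfl⟩ := hj
      obtain ⟨c, hc⟩ := hp x hx
      exact ⟨c, by omega⟩
  · rintro ⟨q, hq⟩
    apply Subtype.ext
    apply Nat.Partition.ext
    show (q.parts.map (fun x => 2 * x)).map (fun x => x / 2) = q.parts
    rw [Multiset.map_map]
    calc q.parts.map ((fun x => x / 2) ∘ (fun x => 2 * x))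
        = q.parts.map id := Multiset.map_congr rfl (fun x _ => by simp)
      _ = q.parts := Multiset.map_id _
  · rintro ⟨p, hp⟩
    apply Subtype.ext
    apply Nat.Partition.ext
    show (p.parts.map (fun x => x / 2)).map (fun x => 2 * x) = p.parts
    rw [Multiset.map_map]
    calc p.parts.map ((fun x => 2 * x) ∘ (fun x => x / 2))
        = p.parts.map id := Multiset.map_congr rfl (fun x hx => by
            obtain ⟨c, hc⟩ := hp x hx
            simp only [Function.comp_apply, id]
            omega)
      _ = p.parts := Multiset.map_id _

lemma p4_zero : p4 0 = 1 := by
  rw [p4, Nat.card_eq_one_iff_unique]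
  constructor
  · constructor
    rintro ⟨p, -⟩ ⟨q, -⟩
    apply Subtype.ext
    apply Nat.Partition.ext
    rw [p.partition_zero_parts, q.partition_zero_parts]
  · exact ⟨⟨default, by rw [(default : Nat.Partition 0).partition_zero_parts]; simp⟩⟩

lemma p4_eq_zero {n : ℕ} (h : ¬ 4 ∣ n) : p4 n = 0 := by
  rw [p4]
  have : IsEmpty {p : n.Partition // ∀ j ∈ p.parts, 4 ∣ j} := by
    constructor
    rintro ⟨p, hp⟩
    exact h (by rw [← p.parts_sum]; exact Multiset.dvd_sum hp)
  exact Nat.card_of_isEmpty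

end

end RhoAux

/-- `∑ ρ_ε(n) q^n = (1/(1−q^2)) (1/(q^4;q^4)_∞ − 1)`. -/
theorem rhoEps_generating_function :
    PowerSeries.mk (fun n => (rhoEps n : ℚ)) =
      (1 - (PowerSeries.X : PowerSeries ℚ) ^ 2)⁻¹ * ((eulerProd 4)⁻¹ - 1) := by
  classical
  have hc2 : PowerSeries.constantCoeff (1 - (PowerSeries.X : PowerSeries ℚ) ^ 2) ≠ 0 := by
    simp [zero_pow]
  have hcE : PowerSeries.constantCoeff (eulerProd 4) ≠ 0 := by
    rw [eulerProd, ← PowerSeries.coeff_zero_eq_constantCoeff, PowerSeries.coeff_mk]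
    simp [zero_pow]
  have hE : (eulerProd 4)⁻¹ = PowerSeries.mk (fun n => (RhoAux.p4 n : ℚ)) :=
    (PowerSeries.inv_eq_iff_mul_eq_one hcE).mpr
      (by rw [mul_comm]; exact RhoAux.eulerProd_mul_p4)
  rw [hE]
  have hMain : (PowerSeries.mk fun n => (rhoEps n : ℚ)) *
      (1 - (PowerSeries.X : PowerSeries ℚ) ^ 2)
      = PowerSeries.mk (fun n => (RhoAux.p4 n : ℚ)) - 1 := by
    ext n
    rw [mul_sub, mul_one]
    simp only [map_sub, PowerSeries.coeff_mk, PowerSeries.coeff_one,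
      PowerSeries.coeff_mul_X_pow']
    by_cases h2 : 2 ∣ n
    · obtain ⟨m, rfl⟩ := h2
      rcases Nat.eq_zero_or_pos m with rfl | hm
      · norm_num [RhoAux.rho_zero, RhoAux.p4_zero]
      · have h1 := RhoAux.rho_two_mul m
        have hmm := RhoAux.rho_two_mul (m - 1)
        have h3 := RhoAux.dcount_succ (m - 1)
        have h4 := RhoAux.ecount_eq_p4 m
        rw [show m - 1 + 1 = m from by omega] at h3
        have hsub : 2 * m - 2 = 2 * (m - 1) := by omega
        rw [if_pos (by omega : 2 ≤ 2 * m), if_neg (by omega : ¬ 2 * m = 0), hsub]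
        have key : rhoEps (2 * m) = rhoEps (2 * (m - 1)) + RhoAux.p4 (2 * m) := by omega
        rw [key]
        push_cast
        ring
    · have h1 : rhoEps n = 0 := RhoAux.rhoEps_not_even h2
      have hp : RhoAux.p4 n = 0 := RhoAux.p4_eq_zero (by omega)
      have hn0 : ¬ n = 0 := by omega
      rw [h1, hp, if_neg hn0]
      by_cases h2n : 2 ≤ n
      · rw [if_pos h2n, RhoAux.rhoEps_not_even (by omega : ¬ 2 ∣ (n - 2))]
        norm_num
      · rw [if_neg h2n]
  calc PowerSeries.mk (fun n => (rhoEps n : ℚ))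
      = (1 - (PowerSeries.X : PowerSeries ℚ) ^ 2)⁻¹ *
        ((1 - (PowerSeries.X : PowerSeries ℚ) ^ 2) *
          PowerSeries.mk (fun n => (rhoEps n : ℚ))) := by
        rw [← mul_assoc, PowerSeries.inv_mul_cancel _ hc2, one_mul]
    _ = (1 - (PowerSeries.X : PowerSeries ℚ) ^ 2)⁻¹ *
        (PowerSeries.mk (fun n => (RhoAux.p4 n : ℚ)) - 1) := by
        rw [mul_comm (1 - (PowerSeries.X : PowerSeries ℚ) ^ 2), hMain]
end

section
/- The counting function a(n), defined as the sum of parts counted without multiplicity over all partitions of n, has generating function ∑_{n≥1} a(n) q^n = (1/(q;q)_∞) · q/(1−q)^2, as formal power series. -/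
open PowerSeries Finset

/-- `a(n)`: the sum of parts counted without multiplicity in all partitions of `n`. -/
noncomputable def aFun (n : ℕ) : ℕ :=
  ∑ p : n.Partition, ∑ x ∈ p.parts.toFinset, x

namespace AuxPartGF
noncomputable section
open scoped Classical
variable {α : Type*}
open Finset.HasAntidiagonal
universe u
variable {ι : Type u}

/-- A convenience constructor for the power series whose coefficients indicate a subset. -/
def indicatorSeries (α : Type*) [Semiring α] (s : Set ℕ) : PowerSeries α :=
  PowerSeries.mk fun n => if n ∈ s then 1 else 0

theorem coeff_indicator (s : Set ℕ) [Semiring α] (n : ℕ) :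
    coeff n (indicatorSeries α s) = if n ∈ s then 1 else 0 :=
  coeff_mk _ _

theorem coeff_indicator_pos (s : Set ℕ) [Semiring α] (n : ℕ) (h : n ∈ s) :
    coeff n (indicatorSeries α s) = 1 := by rw [coeff_indicator, if_pos h]

theorem coeff_indicator_neg (s : Set ℕ) [Semiring α] (n : ℕ) (h : n ∉ s) :
    coeff n (indicatorSeries α s) = 0 := by rw [coeff_indicator, if_neg h]

theorem constantCoeff_indicator (s : Set ℕ) [Semiring α] :
    constantCoeff (indicatorSeries α s) = if 0 ∈ s then 1 else 0 :=
  rfl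

theorem two_series (i : ℕ) [Semiring α] :
    1 + (X : PowerSeries α) ^ i.succ = indicatorSeries α {0, i.succ} := by
  ext n
  simp only [coeff_indicator, coeff_one, coeff_X_pow, Set.mem_insert_iff, Set.mem_singleton_iff,
    map_add]
  cases' n with d
  · simp [(Nat.succ_ne_zero i).symm]
  · simp [Nat.succ_ne_zero d]

theorem num_series' [Field α] (i : ℕ) :
    (1 - (X : PowerSeries α) ^ (i + 1))⁻¹ = indicatorSeries α {k | i + 1 ∣ k} := by
  rw [PowerSeries.inv_eq_iff_mul_eq_one]
  · ext n
    cases n with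
    | zero => simp [mul_sub, zero_pow, constantCoeff_indicator]
    | succ n =>
      simp only [coeff_one, if_false, mul_sub, mul_one, coeff_indicator,
        LinearMap.map_sub, reduceCtorEq]
      simp_rw [coeff_mul, coeff_X_pow, coeff_indicator, @boole_mul _ _ _ _]
      erw [@sum_ite _ _ _ _ _ (fun _ => Classical.propDecidable _), sum_ite]
      simp_rw [@filter_filter _ _ _ _ _, sum_const_zero, add_zero, sum_const, nsmul_eq_mul, mul_one,
        sub_eq_iff_eq_add, zero_add]
      symm
      split_ifs with h
      · suffices #{a ∈ antidiagonal (n + 1) | i + 1 ∣ a.fst ∧ a.snd = i + 1} = 1 by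
          simp only [Set.mem_setOf_eq]; convert congr_arg ((↑) : ℕ → α) this; norm_cast
        rw [card_eq_one]
        cases' h with p hp
        refine ⟨((i + 1) * (p - 1), i + 1), ?_⟩
        ext ⟨a₁, a₂⟩
        simp only [mem_filter, Prod.mk_inj, HasAntidiagonal.mem_antidiagonal, mem_singleton]
        constructor
        · rintro ⟨a_left, ⟨a, rfl⟩, rfl⟩
          refine ⟨?_, rfl⟩
          rw [Nat.mul_sub_left_distrib, ← hp, ← a_left, mul_one, Nat.add_sub_cancel]
        · rintro ⟨rfl, rfl⟩
          match p with
          | 0 => rw [mul_zero] at hp; cases hp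
          | p + 1 => rw [hp]; simp [mul_add]
      · suffices #{a ∈ antidiagonal (n + 1) | i + 1 ∣ a.fst ∧ a.snd = i + 1} = 0 by
          simp only [Set.mem_setOf_eq]; convert congr_arg ((↑) : ℕ → α) this; norm_cast
        rw [card_eq_zero]
        apply eq_empty_of_forall_notMem
        simp only [Prod.forall, mem_filter, not_and, HasAntidiagonal.mem_antidiagonal]
        rintro _ h₁ h₂ ⟨a, rfl⟩ rfl
        apply h
        simp [← h₂]
  · simp [zero_pow]

def mkOdd : ℕ ↪ ℕ :=
  ⟨fun i => 2 * i + 1, fun x y h => by linarith⟩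

-- The main workhorse of the partition theorem proof.
theorem partialGF_prop (α : Type*) [CommSemiring α] (n : ℕ) (s : Finset ℕ) (hs : ∀ i ∈ s, 0 < i)
    (c : ℕ → Set ℕ) (hc : ∀ i, i ∉ s → 0 ∈ c i) :
    #{p : n.Partition | (∀ j, p.parts.count j ∈ c j) ∧ ∀ j ∈ p.parts, j ∈ s} =
      coeff n (∏ i ∈ s, indicatorSeries α ((· * i) '' c i)) := by
  simp_rw [coeff_prod, coeff_indicator, prod_boole, sum_boole]
  apply congr_arg
  simp only [mem_univ, forall_true_left, not_and, not_forall, exists_prop,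
    Set.mem_image, not_exists]
  set φ : (a : Nat.Partition n) →
    a ∈ filter (fun p ↦ (∀ (j : ℕ), Multiset.count j p.parts ∈ c j) ∧ ∀ j ∈ p.parts, j ∈ s) univ →
    ℕ →₀ ℕ := fun p _ => {
      toFun := fun i => Multiset.count i p.parts • i
      support := Finset.filter (fun i => i ≠ 0) p.parts.toFinset
      mem_support_toFun := fun a => by
        simp only [smul_eq_mul, ne_eq, mul_eq_zero, Multiset.count_eq_zero]
        rw [not_or, not_not]
        simp only [Multiset.mem_toFinset, not_not, mem_filter] }
  refine Finset.card_bij φ ?_ ?_ ?_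
  · intro a ha
    simp only [φ, not_forall, not_exists, not_and, exists_prop, mem_filter]
    rw [mem_finsuppAntidiag]
    dsimp only [ne_eq, smul_eq_mul, id_eq, eq_mpr_eq_cast, le_eq_subset, Finsupp.coe_mk]
    simp only [mem_univ, forall_true_left, not_and, not_forall, exists_prop,
      mem_filter, true_and] at ha
    refine ⟨⟨?_, fun i ↦ ?_⟩, fun i _ ↦ ⟨a.parts.count i, ha.1 i, rfl⟩⟩
    · conv_rhs => simp [← a.parts_sum]
      rw [sum_multiset_count_of_subset _ s]
      · simp only [smul_eq_mul]
      · intro i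
        simp only [Multiset.mem_toFinset, not_not, mem_filter]
        apply ha.2
    · simp only [ne_eq, Multiset.mem_toFinset, not_not, mem_filter, and_imp]
      exact fun hi _ ↦ ha.2 i hi
  · intro p₁ hp₁ p₂ hp₂ h
    apply Nat.Partition.ext
    simp only [true_and, mem_univ, mem_filter] at hp₁ hp₂
    ext i
    simp only [φ, ne_eq, Multiset.mem_toFinset, not_not, smul_eq_mul, Finsupp.mk.injEq] at h
    by_cases hi : i = 0
    · rw [hi]
      rw [Multiset.count_eq_zero_of_notMem]
      · rw [Multiset.count_eq_zero_of_notMem]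
        intro a; exact Nat.lt_irrefl 0 (hs 0 (hp₂.2 0 a))
      intro a; exact Nat.lt_irrefl 0 (hs 0 (hp₁.2 0 a))
    · rw [← mul_left_inj' hi]
      rw [funext_iff] at h
      exact h.2 i
  · simp only [φ, mem_filter, mem_finsuppAntidiag, mem_univ, exists_prop, true_and, and_assoc]
    rintro f ⟨hf, hf₃, hf₄⟩
    have hf' : f ∈ finsuppAntidiag s n := mem_finsuppAntidiag.mpr ⟨hf, hf₃⟩
    simp only [mem_finsuppAntidiag] at hf'
    refine ⟨⟨∑ i ∈ s, Multiset.replicate (f i / i) i, ?_, ?_⟩, ?_, ?_, ?_⟩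
    · intro i hi
      simp only [exists_prop, Multiset.mem_sum, mem_map, Function.Embedding.coeFn_mk] at hi
      rcases hi with ⟨t, ht, z⟩
      apply hs
      rwa [Multiset.eq_of_mem_replicate z]
    · simp_rw [Multiset.sum_sum, Multiset.sum_replicate, Nat.nsmul_eq_mul]
      rw [← hf'.1]
      refine sum_congr rfl fun i hi => Nat.div_mul_cancel ?_
      rcases hf₄ i hi with ⟨w, _, hw₂⟩
      rw [← hw₂]
      exact dvd_mul_left _ _
    · intro i
      simp_rw [Multiset.count_sum', Multiset.count_replicate, sum_ite_eq']
      split_ifs with h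
      · rcases hf₄ i h with ⟨w, hw₁, hw₂⟩
        rwa [← hw₂, Nat.mul_div_cancel _ (hs i h)]
      · exact hc _ h
    · intro i hi
      rw [Multiset.mem_sum] at hi
      rcases hi with ⟨j, hj₁, hj₂⟩
      rwa [Multiset.eq_of_mem_replicate hj₂]
    · ext i
      simp_rw [Multiset.count_sum', Multiset.count_replicate, sum_ite_eq']
      simp only [ne_eq, Multiset.mem_toFinset, not_not, smul_eq_mul, ite_mul,
        zero_mul, Finsupp.coe_mk]
      split_ifs with h
      · apply Nat.div_mul_cancel
        rcases hf₄ i h with ⟨w, _, hw₂⟩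
        apply Dvd.intro_left _ hw₂
      · apply symm
        rw [← Finsupp.notMem_support_iff]
        exact notMem_mono hf'.2 h


end
end AuxPartGF

namespace AuxGF
open scoped Classical
open AuxPartGF

noncomputable def pGF : PowerSeries ℚ := PowerSeries.mk fun n => (Fintype.card (Nat.Partition n) : ℚ)

theorem partition_count (n m : ℕ) (h : n < m) :
    (Fintype.card (Nat.Partition n) : ℚ) =
      PowerSeries.coeff n (∏ i ∈ range m, (1 - (X : PowerSeries ℚ) ^ (i + 1))⁻¹) := by
  have key :
      #{p : n.Partition | (∀ j, p.parts.count j ∈ (Set.univ : Set ℕ)) ∧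
          ∀ j ∈ p.parts, j ∈ (range m).map ⟨Nat.succ, Nat.succ_injective⟩} =
        PowerSeries.coeff (R := ℚ) n (∏ i ∈ range m, (1 - (X : PowerSeries ℚ) ^ (i + 1))⁻¹) := by
    convert partialGF_prop ℚ n ((range m).map ⟨Nat.succ, Nat.succ_injective⟩) ?_
      (fun _ => Set.univ) (fun _ _ => trivial) using 2
    · rw [Finset.prod_map]
      simp_rw [num_series']
      congr! 2 with x
      ext k
      constructor
      · rintro ⟨p, rfl⟩
        exact ⟨p, trivial, mul_comm _ _⟩
      · rintro ⟨a_w, -, rfl⟩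
        apply Dvd.intro_left a_w rfl
    · simp only [mem_map, Function.Embedding.coeFn_mk]
      rintro i ⟨_, _, rfl⟩
      exact Nat.succ_pos _
  rw [← key]
  norm_cast
  rw [← Finset.card_univ]
  congr 1
  rw [Finset.filter_true_of_mem]
  rintro p -
  refine ⟨fun _ => trivial, fun j hj => ?_⟩
  have hj1 : 0 < j := p.parts_pos hj
  have hjn : j ≤ n := by
    simpa [p.parts_sum] using Multiset.single_le_sum (fun _ _ => Nat.zero_le _) _ hj
  simp only [mem_map, Function.Embedding.coeFn_mk, mem_range]
  exact ⟨j - 1, by omega, by omega⟩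

theorem coeff_prod_stab (i m : ℕ) (h : i < m) :
    PowerSeries.coeff i (∏ k ∈ range m, (1 - (X : PowerSeries ℚ) ^ (k + 1))) =
      PowerSeries.coeff i (∏ k ∈ range (i + 1), (1 - (X : PowerSeries ℚ) ^ (k + 1))) := by
  have hdis : Disjoint (range (i + 1)) (Ico (i + 1) m) := by
    simp only [Finset.disjoint_left, mem_range, mem_Ico]
    omega
  have hr : range m = range (i + 1) ∪ Ico (i + 1) m := by
    ext x
    simp only [mem_range, mem_union, mem_Ico]
    omega
  rw [hr, Finset.prod_union hdis]
  apply coeff_mul_prod_one_sub_of_lt_order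
  intro k hk
  rw [order_X_pow]
  exact Nat.cast_lt.mpr (Nat.lt_succ_of_lt (Finset.mem_Ico.mp hk).1)

theorem coeff_eulerProd (i : ℕ) :
    PowerSeries.coeff i (eulerProd 1) =
      PowerSeries.coeff i (∏ k ∈ range (i + 1), (1 - (X : PowerSeries ℚ) ^ (k + 1))) := by
  simp [eulerProd, PowerSeries.coeff_mk]

theorem euler_mul_pGF : eulerProd 1 * pGF = 1 := by
  ext n
  rw [PowerSeries.coeff_mul]
  have hterm : ∀ p ∈ antidiagonal n,
      PowerSeries.coeff p.1 (eulerProd 1) * PowerSeries.coeff p.2 pGF =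
        PowerSeries.coeff p.1 (∏ k ∈ range (n + 1), (1 - (X : PowerSeries ℚ) ^ (k + 1))) *
          PowerSeries.coeff p.2 (∏ k ∈ range (n + 1), (1 - (X : PowerSeries ℚ) ^ (k + 1))⁻¹) := by
    rintro ⟨a, b⟩ hp
    rw [Finset.HasAntidiagonal.mem_antidiagonal] at hp
    have ha : a < n + 1 := by omega
    have hb : b < n + 1 := by omega
    rw [coeff_eulerProd, coeff_prod_stab a (n + 1) ha]
    rw [show PowerSeries.coeff (a, b).2 pGF = (Fintype.card (Nat.Partition b) : ℚ) from PowerSeries.coeff_mk _ _,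
      partition_count b (n + 1) hb]
  rw [Finset.sum_congr rfl hterm, ← PowerSeries.coeff_mul, ← Finset.prod_mul_distrib]
  have : ∀ k ∈ range (n + 1),
      (1 - (X : PowerSeries ℚ) ^ (k + 1)) * (1 - (X : PowerSeries ℚ) ^ (k + 1))⁻¹ = 1 := by
    intro k _
    apply PowerSeries.mul_inv_cancel
    simp [zero_pow]
  rw [Finset.prod_congr rfl this, Finset.prod_const_one]

theorem eulerProd_inv : (eulerProd 1)⁻¹ = pGF := by
  have h : PowerSeries.constantCoeff (eulerProd 1) ≠ 0 := by
    have := coeff_eulerProd 0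
    rw [← PowerSeries.coeff_zero_eq_constantCoeff]
    rw [this]
    simp [zero_pow]
  rw [PowerSeries.inv_eq_iff_mul_eq_one h]
  rw [mul_comm]
  exact euler_mul_pGF

theorem geom_sq : (X : PowerSeries ℚ) * ((1 - (X : PowerSeries ℚ))⁻¹) ^ 2 =
    PowerSeries.mk fun n => (n : ℚ) := by
  have h1 : ((1 - (X : PowerSeries ℚ))⁻¹) = PowerSeries.mk fun _ => (1 : ℚ) := by
    have h0 := num_series' (α := ℚ) 0
    rw [zero_add, pow_one] at h0
    rw [h0]
    ext n
    simp [indicatorSeries, PowerSeries.coeff_mk]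
  rw [h1]
  ext n
  rcases n with _ | n
  · simp [PowerSeries.coeff_zero_eq_constantCoeff, zero_pow]
  · rw [PowerSeries.coeff_succ_X_mul, sq, PowerSeries.coeff_mul, PowerSeries.coeff_mk]
    simp [PowerSeries.coeff_mk, Finset.Nat.card_antidiagonal]

theorem card_filter_mem (n j : ℕ) (hj : 0 < j) (hjn : j ≤ n) :
    #(univ.filter fun p : n.Partition => j ∈ p.parts) = Fintype.card (Nat.Partition (n - j)) := by
  rw [← Finset.card_univ]
  have hsum : ∀ (p : n.Partition), j ∈ p.parts → (p.parts.erase j).sum = n - j := by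
    intro p hp
    have h1 : j ::ₘ p.parts.erase j = p.parts := Multiset.cons_erase hp
    have h2 := p.parts_sum
    rw [← h1, Multiset.sum_cons] at h2
    omega
  refine Finset.card_bij'
    (fun p hp => ⟨p.parts.erase j,
      fun hx => p.parts_pos (Multiset.mem_of_mem_erase hx),
      hsum p (by simpa using hp)⟩)
    (fun q _ => ⟨j ::ₘ q.parts,
      fun hx => (Multiset.mem_cons.1 hx).elim (fun h => h ▸ hj) q.parts_pos,
      by rw [Multiset.sum_cons, q.parts_sum]; omega⟩)
    (fun p hp => Finset.mem_univ _) (fun q hq => ?_) (fun p hp => ?_) (fun q hq => ?_)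
  · simp [Multiset.mem_cons]
  · apply Nat.Partition.ext
    exact Multiset.cons_erase (by simpa using hp)
  · apply Nat.Partition.ext
    exact Multiset.erase_cons_head _ _

theorem aFun_eq (n : ℕ) :
    aFun n = ∑ j ∈ range (n + 1), Fintype.card (Nat.Partition (n - j)) * j := by
  have hto : ∀ p : n.Partition,
      p.parts.toFinset = (range (n + 1)).filter (fun j => j ∈ p.parts) := by
    intro p; ext x
    simp only [Multiset.mem_toFinset, mem_filter, mem_range]
    constructor
    · intro hx
      refine ⟨Nat.lt_succ_of_le ?_, hx⟩
      simpa [p.parts_sum] using Multiset.single_le_sum (fun _ _ => Nat.zero_le _) _ hx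
    · exact fun h => h.2
  unfold aFun
  calc ∑ p : n.Partition, ∑ x ∈ p.parts.toFinset, x
      = ∑ p : n.Partition, ∑ j ∈ range (n + 1), if j ∈ p.parts then j else 0 := by
        refine Finset.sum_congr rfl fun p _ => ?_
        rw [hto p, Finset.sum_filter]
    _ = ∑ j ∈ range (n + 1), ∑ p : n.Partition, if j ∈ p.parts then j else 0 :=
        Finset.sum_comm
    _ = ∑ j ∈ range (n + 1), #(univ.filter fun p : n.Partition => j ∈ p.parts) * j := by
        refine Finset.sum_congr rfl fun j _ => ?_
        rw [Finset.sum_ite, Finset.sum_const, Finset.sum_const_zero, add_zero, smul_eq_mul]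
    _ = ∑ j ∈ range (n + 1), Fintype.card (Nat.Partition (n - j)) * j := by
        refine Finset.sum_congr rfl fun j hj => ?_
        rcases Nat.eq_zero_or_pos j with rfl | hj0
        · simp
        · rw [card_filter_mem n j hj0 (Nat.le_of_lt_succ (mem_range.1 hj))]

end AuxGF

/-- `∑_{n≥1} a(n) q^n = (1/(q;q)_∞) · q/(1−q)^2`. -/
theorem aFun_generating_function :
    PowerSeries.mk (fun n => (aFun n : ℚ)) =
      (eulerProd 1)⁻¹ * ((PowerSeries.X : PowerSeries ℚ)
        * ((1 - (PowerSeries.X : PowerSeries ℚ))⁻¹) ^ 2) := by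
  rw [AuxGF.eulerProd_inv, AuxGF.geom_sq]
  ext n
  rw [PowerSeries.coeff_mk, PowerSeries.coeff_mul, AuxGF.aFun_eq,
    Finset.Nat.sum_antidiagonal_eq_sum_range_succ_mk]
  simp only [AuxGF.pGF, PowerSeries.coeff_mk]
  rw [← Finset.sum_range_reflect]
  push_cast
  refine Finset.sum_congr rfl fun j hj => ?_
  rw [mem_range] at hj
  have h1 : n + 1 - 1 - j = n - j := by omega
  have h2 : n - (n - j) = j := by omega
  rw [h2]
end

section
/- For every n ≥ 2, ρ̄(2n) = p̄(n) − 2 and ρ̄(2n+1) = 0, where p̄ is the overpartition function. -/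
open Multiset

namespace RhoBarAux

lemma part_le {n : ℕ} (p : n.Partition) {x : ℕ} (hx : x ∈ p.parts) : x ≤ n := by
  rw [← p.parts_sum]
  exact Multiset.single_le_sum (fun y _ => Nat.zero_le y) x hx

lemma eq_indiscrete {n : ℕ} (hn : n ≠ 0) (q : n.Partition) (h : n ∈ q.parts) :
    q = Nat.Partition.indiscrete n := by
  have h2 : (q.parts.erase n).sum = 0 := by
    have hs : q.parts.sum = n + (q.parts.erase n).sum := by
      rw [← Multiset.sum_cons, Multiset.cons_erase h]
    have := q.parts_sum
    omega
  have h3 : q.parts.erase n = 0 := by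
    apply Multiset.eq_zero_of_forall_notMem
    intro a ha
    have ha0 : 0 < a := q.parts_pos (Multiset.mem_of_mem_erase ha)
    have : a = 0 := (Multiset.sum_eq_zero_iff.mp h2) a ha
    omega
  apply Nat.Partition.ext
  rw [Nat.Partition.indiscrete_parts hn]
  have := Multiset.cons_erase h
  rw [h3] at this
  rw [← this]
  rfl

lemma finA (n : ℕ) : Finite {ps : n.Partition × Finset ℕ // ∀ x ∈ ps.2, x ∈ ps.1.parts} := by
  apply Finite.of_injective (β := n.Partition × ((Finset.range (n+1)).powerset : Finset (Finset ℕ)))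
    (fun x => (x.1.1, ⟨x.1.2, by
      rw [Finset.mem_powerset]
      intro a ha
      rw [Finset.mem_range]
      exact Nat.lt_succ_of_le (part_le _ (x.2 a ha))⟩))
  rintro ⟨⟨p, S⟩, hx⟩ ⟨⟨q, T⟩, hy⟩ h
  simp only [Prod.mk.injEq, Subtype.mk.injEq] at h
  simp [Prod.ext_iff, h.1, h.2]

end RhoBarAux

/-- `ρ̄(n)`: the number of partitions of `n` whose largest part `m` occurs exactly once
and whose remaining parts form an overpartition of `m`; an overpartition is recorded as
the underlying partition together with the set `S` of overlined part sizes. -/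
noncomputable def rhoBar (n : ℕ) : ℕ :=
  Nat.card {ps : n.Partition × Finset ℕ // ∃ m ∈ ps.1.parts, ps.1.parts.count m = 1 ∧
    (∀ x ∈ ps.1.parts, x ≤ m) ∧ (ps.1.parts.erase m).sum = m ∧
    ∀ x ∈ ps.2, x ∈ ps.1.parts.erase m}

/-- `p̄(n)`: the number of overpartitions of `n`, i.e. partitions of `n` together with a
set of overlined part sizes. -/
noncomputable def pBar (n : ℕ) : ℕ :=
  Nat.card {ps : n.Partition × Finset ℕ // ∀ x ∈ ps.2, x ∈ ps.1.parts}

namespace RhoBarAux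

variable (n : ℕ)

/-- witness `m` is forced to be `n` in the even case -/
lemma m_eq {n : ℕ} (p : (2 * n).Partition) {m : ℕ} (hm : m ∈ p.parts)
    (hsum : (p.parts.erase m).sum = m) : m = n := by
  have hs : p.parts.sum = m + (p.parts.erase m).sum := by
    rw [← Multiset.sum_cons, Multiset.cons_erase hm]
  have := p.parts_sum
  omega

abbrev A := {ps : n.Partition × Finset ℕ // ∀ x ∈ ps.2, x ∈ ps.1.parts}

abbrev B := {ps : (2 * n).Partition × Finset ℕ // ∃ m ∈ ps.1.parts, ps.1.parts.count m = 1 ∧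
    (∀ x ∈ ps.1.parts, x ≤ m) ∧ (ps.1.parts.erase m).sum = m ∧
    ∀ x ∈ ps.2, x ∈ ps.1.parts.erase m}

lemma mainEquiv (hn : n ≠ 0) :
    Nonempty (B n ≃ {x : A n // x.1.1 ≠ Nat.Partition.indiscrete n}) := by
  refine ⟨{
    toFun := fun x => ⟨⟨(⟨x.1.1.parts.erase n, fun hi =>
        x.1.1.parts_pos (Multiset.mem_of_mem_erase hi), by
          obtain ⟨m, hm, hc, hle, hsum, hS⟩ := x.2
          have := m_eq x.1.1 hm hsum
          subst this
          exact hsum⟩, x.1.2), by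
        obtain ⟨m, hm, hc, hle, hsum, hS⟩ := x.2
        have := m_eq x.1.1 hm hsum
        subst this
        exact hS⟩, by
      obtain ⟨m, hm, hc, hle, hsum, hS⟩ := x.2
      have := m_eq x.1.1 hm hsum
      subst this
      intro h
      have hmem : m ∈ x.1.1.parts.erase m := by
        have h2 := congrArg Nat.Partition.parts h
        rw [Nat.Partition.indiscrete_parts hn] at h2
        have h3 : x.1.1.parts.erase m = {m} := h2
        rw [h3]
        simp
      have : x.1.1.parts.count m ≤ 0 := by
        have := Multiset.count_erase_self m x.1.1.parts
        have h1 : 1 ≤ (x.1.1.parts.erase m).count m := Multiset.one_le_count_iff_mem.mpr hmem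
        omega
      omega⟩
    invFun := fun y => ⟨⟨⟨n ::ₘ y.1.1.1.parts, fun hi => by
        rcases Multiset.mem_cons.mp hi with h | h
        · omega
        · exact y.1.1.1.parts_pos h, by
        rw [Multiset.sum_cons, y.1.1.1.parts_sum]; ring⟩, y.1.1.2⟩, by
      have hnotin : n ∉ y.1.1.1.parts := fun h => y.2 (eq_indiscrete hn _ h)
      refine ⟨n, Multiset.mem_cons_self _ _, ?_, ?_, ?_, ?_⟩
      · rw [Multiset.count_cons_self, Multiset.count_eq_zero.mpr hnotin]
      · intro x hx
        rcases Multiset.mem_cons.mp hx with h | h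
        · omega
        · exact part_le _ h
      · rw [Multiset.erase_cons_head, y.1.1.1.parts_sum]
      · rw [Multiset.erase_cons_head]
        exact y.1.2⟩
    left_inv := fun x => by
      obtain ⟨m, hm, hc, hle, hsum, hS⟩ := x.2
      have := m_eq x.1.1 hm hsum
      subst this
      apply Subtype.ext
      apply Prod.ext
      · apply Nat.Partition.ext
        exact Multiset.cons_erase hm
      · rfl
    right_inv := fun y => by
      apply Subtype.ext
      apply Subtype.ext
      apply Prod.ext
      · apply Nat.Partition.ext
        exact Multiset.erase_cons_head _ _
      · rfl }⟩

lemma badEquiv (hn : n ≠ 0) :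
    Nonempty ({x : A n // x.1.1 = Nat.Partition.indiscrete n} ≃ Bool) := by
  refine ⟨{
    toFun := fun x => decide (n ∈ x.1.1.2)
    invFun := fun b => ⟨⟨(Nat.Partition.indiscrete n, if b then {n} else ∅), by
      cases b <;> simp [Nat.Partition.indiscrete_parts hn]⟩, rfl⟩
    left_inv := fun x => by
      have hsub : x.1.1.2 ⊆ {n} := by
        intro a ha
        have := x.1.2 a ha
        rw [x.2, Nat.Partition.indiscrete_parts hn] at this
        simpa using this
      rcases Finset.subset_singleton_iff.mp hsub with h | h
      · apply Subtype.ext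
        apply Subtype.ext
        apply Prod.ext
        · exact x.2.symm
        · simp [h]
      · apply Subtype.ext
        apply Subtype.ext
        apply Prod.ext
        · exact x.2.symm
        · simp [h]
    right_inv := fun b => by cases b <;> simp }⟩

end RhoBarAux

/-- For every `n ≥ 2`, `ρ̄(2n) = p̄(n) − 2` and `ρ̄(2n+1) = 0`. -/
theorem rhoBar_even_odd (n : ℕ) (hn : 2 ≤ n) :
    rhoBar (2 * n) = pBar n - 2 ∧ rhoBar (2 * n + 1) = 0 := by
  classical
  have hn0 : n ≠ 0 := by omega
  constructor
  · -- even case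
    haveI : Finite (RhoBarAux.A n) := RhoBarAux.finA n
    obtain ⟨e1⟩ := RhoBarAux.mainEquiv n hn0
    obtain ⟨e2⟩ := RhoBarAux.badEquiv n hn0
    have hB : rhoBar (2 * n) = Nat.card {x : RhoBarAux.A n //
        x.1.1 ≠ Nat.Partition.indiscrete n} := Nat.card_congr e1
    have hbad : Nat.card {x : RhoBarAux.A n // x.1.1 = Nat.Partition.indiscrete n} = 2 := by
      rw [Nat.card_congr e2]
      simp
    have hA : pBar n = Nat.card {x : RhoBarAux.A n // x.1.1 = Nat.Partition.indiscrete n} +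
        Nat.card {x : RhoBarAux.A n // x.1.1 ≠ Nat.Partition.indiscrete n} := by
      rw [← Nat.card_sum]
      exact Nat.card_congr (Equiv.sumCompl (fun x : RhoBarAux.A n =>
        x.1.1 = Nat.Partition.indiscrete n)).symm
    rw [hB, hA, hbad]
    omega
  · -- odd case
    have : IsEmpty {ps : (2 * n + 1).Partition × Finset ℕ //
        ∃ m ∈ ps.1.parts, ps.1.parts.count m = 1 ∧
        (∀ x ∈ ps.1.parts, x ≤ m) ∧ (ps.1.parts.erase m).sum = m ∧
        ∀ x ∈ ps.2, x ∈ ps.1.parts.erase m} := by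
      constructor
      rintro ⟨⟨p, S⟩, m, hm, hc, hle, hsum, hS⟩
      have hs : p.parts.sum = m + (p.parts.erase m).sum := by
        rw [← Multiset.sum_cons, Multiset.cons_erase hm]
      rw [hsum, p.parts_sum] at hs
      omega
    rw [rhoBar]
    exact Nat.card_of_isEmpty
end

section
/- For every integer ℓ ≥ 2 and every n ≥ 2, ρ_ℓ(2n) = b_ℓ(n) − [ℓ ∤ n], i.e., ρ_ℓ(2n) = b_ℓ(n) if ℓ divides n and ρ_ℓ(2n) = b_ℓ(n) − 1 otherwise; moreover ρ_ℓ(2n+1) = 0. -/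
/-- `ρ_ℓ(n)`: the number of partitions of `n` in which the largest part `m` appears
exactly once and the remaining parts form an `ℓ`-regular partition of `m`. -/
noncomputable def rhoReg (ℓ n : ℕ) : ℕ :=
  Nat.card {p : n.Partition // ∃ m ∈ p.parts, p.parts.count m = 1 ∧
    (∀ x ∈ p.parts, x ≤ m) ∧ (p.parts.erase m).sum = m ∧
    ∀ x ∈ p.parts.erase m, ¬ ℓ ∣ x}

/-- `b_ℓ(n)`: the number of `ℓ`-regular partitions of `n` (no part divisible by `ℓ`). -/
noncomputable def bReg (ℓ n : ℕ) : ℕ :=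
  Nat.card {p : n.Partition // ∀ x ∈ p.parts, ¬ ℓ ∣ x}

/-- For `ℓ ≥ 2` and `n ≥ 2`: `ρ_ℓ(2n) = b_ℓ(n)` if `ℓ ∣ n`, `ρ_ℓ(2n) = b_ℓ(n) − 1`
otherwise, and `ρ_ℓ(2n+1) = 0`. -/
theorem rhoReg_even_odd (ℓ : ℕ) (hℓ : 2 ≤ ℓ) (n : ℕ) (hn : 2 ≤ n) :
    rhoReg ℓ (2 * n) = (if ℓ ∣ n then bReg ℓ n else bReg ℓ n - 1) ∧
      rhoReg ℓ (2 * n + 1) = 0 := by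
  classical
  have hnpos : 0 < n := by omega
  -- a partition of n containing n as a part is the singleton partition
  have hsingle : ∀ q : n.Partition, n ∈ q.parts → q.parts = {n} := by
    intro q hq
    have h2 : n ::ₘ q.parts.erase n = q.parts := Multiset.cons_erase hq
    have h1 : q.parts.sum = n := q.parts_sum
    rw [← h2, Multiset.sum_cons] at h1
    have h0 : (q.parts.erase n).sum = 0 := by omega
    have he : q.parts.erase n = 0 := by
      rw [Multiset.eq_zero_iff_forall_notMem]
      intro x hx
      have hx0 : x = 0 := by
        have := Multiset.sum_eq_zero_iff.mp h0 x hx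
        exact this
      have := q.parts_pos (Multiset.mem_of_mem_erase hx)
      omega
    rw [← h2, he]
    rfl
  constructor
  · -- even part
    set P : (2 * n).Partition → Prop := fun p => ∃ m ∈ p.parts, p.parts.count m = 1 ∧
      (∀ x ∈ p.parts, x ≤ m) ∧ (p.parts.erase m).sum = m ∧
      ∀ x ∈ p.parts.erase m, ¬ ℓ ∣ x with hP
    set A : Finset ((2 * n).Partition) := Finset.univ.filter P with hA
    set B : Finset (n.Partition) :=
      Finset.univ.filter (fun q => (∀ x ∈ q.parts, ¬ ℓ ∣ x) ∧ n ∉ q.parts) with hB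
    set C : Finset (n.Partition) :=
      Finset.univ.filter (fun q => ∀ x ∈ q.parts, ¬ ℓ ∣ x) with hC
    have hrho : rhoReg ℓ (2 * n) = A.card := by
      unfold rhoReg
      rw [Nat.card_eq_fintype_card, Fintype.card_subtype]
    have hb : bReg ℓ n = C.card := by
      unfold bReg
      rw [Nat.card_eq_fintype_card, Fintype.card_subtype]
    -- key facts about elements of A
    have hA_n : ∀ p ∈ A, n ∈ p.parts ∧ p.parts.count n = 1 ∧
        (p.parts.erase n).sum = n ∧ ∀ x ∈ p.parts.erase n, ¬ ℓ ∣ x := by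
      intro p hp
      obtain ⟨m, hm, hcount, _, hsum, hreg⟩ := (Finset.mem_filter.mp hp).2
      have h2 : m ::ₘ p.parts.erase m = p.parts := Multiset.cons_erase hm
      have h1 : p.parts.sum = 2 * n := p.parts_sum
      rw [← h2, Multiset.sum_cons, hsum] at h1
      have hmn : m = n := by omega
      subst hmn
      exact ⟨hm, hcount, hsum, hreg⟩
    have hAB : A.card = B.card := by
      refine Finset.card_bij (fun p hp => ⟨p.parts.erase n,
        (fun hi => p.parts_pos (Multiset.mem_of_mem_erase hi)),
        (hA_n p hp).2.2.1⟩) ?_ ?_ ?_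
      · intro p hp
        obtain ⟨hmem, hcount, hsum, hreg⟩ := hA_n p hp
        refine Finset.mem_filter.mpr ⟨Finset.mem_univ _, hreg, ?_⟩
        have h0 : (p.parts.erase n).count n = 0 := by
          rw [Multiset.count_erase_self, hcount]
        exact Multiset.count_eq_zero.mp h0
      · intro p₁ h₁ p₂ h₂ heq
        have hparts : p₁.parts.erase n = p₂.parts.erase n :=
          congrArg Nat.Partition.parts heq
        have e₁ : n ::ₘ p₁.parts.erase n = p₁.parts := Multiset.cons_erase (hA_n p₁ h₁).1
        have e₂ : n ::ₘ p₂.parts.erase n = p₂.parts := Multiset.cons_erase (hA_n p₂ h₂).1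
        ext1
        rw [← e₁, ← e₂, hparts]
      · intro q hq
        obtain ⟨-, hreg, hnot⟩ := Finset.mem_filter.mp hq
        refine ⟨⟨n ::ₘ q.parts, ?_, ?_⟩, ?_, ?_⟩
        · intro i hi
          rcases Multiset.mem_cons.mp hi with rfl | hi
          · exact hnpos
          · exact q.parts_pos hi
        · rw [Multiset.sum_cons, q.parts_sum]; ring
        · refine Finset.mem_filter.mpr ⟨Finset.mem_univ _, n, Multiset.mem_cons_self _ _, ?_, ?_, ?_, ?_⟩
          · rw [Multiset.count_cons_self, Multiset.count_eq_zero.mpr hnot]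
          · intro x hx
            rcases Multiset.mem_cons.mp hx with rfl | hx
            · exact le_rfl
            · calc x ≤ q.parts.sum :=
                    Multiset.single_le_sum (fun _ _ => Nat.zero_le _) _ hx
                _ = n := q.parts_sum
          · rw [Multiset.erase_cons_head, q.parts_sum]
          · rw [Multiset.erase_cons_head]; exact hreg
        · ext1
          simp [Multiset.erase_cons_head]
    rw [hrho, hAB, hb]
    by_cases hdvd : ℓ ∣ n
    · rw [if_pos hdvd]
      congr 1
      apply Finset.filter_congr
      intro q _
      simp only [and_iff_left_iff_imp]
      intro hreg hmem
      have := hsingle q hmem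
      exact hreg n hmem hdvd
    · rw [if_neg hdvd]
      have hBC : B = C.erase (Nat.Partition.indiscrete n) := by
        ext q
        simp only [hB, hC, Finset.mem_filter, Finset.mem_erase, Finset.mem_univ, true_and]
        constructor
        · rintro ⟨hreg, hnot⟩
          refine ⟨?_, hreg⟩
          intro heq
          apply hnot
          rw [heq, Nat.Partition.indiscrete_parts (by omega)]
          exact Multiset.mem_singleton_self _
        · rintro ⟨hne, hreg⟩
          refine ⟨hreg, ?_⟩
          intro hmem
          apply hne
          ext1
          rw [hsingle q hmem, Nat.Partition.indiscrete_parts (by omega)]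
      have hCmem : Nat.Partition.indiscrete n ∈ C := by
        refine Finset.mem_filter.mpr ⟨Finset.mem_univ _, ?_⟩
        intro x hx
        rw [Nat.Partition.indiscrete_parts (by omega)] at hx
        rw [Multiset.mem_singleton.mp hx]
        exact hdvd
      rw [hBC, Finset.card_erase_of_mem hCmem]
  · -- odd part
    have : IsEmpty {p : (2 * n + 1).Partition // ∃ m ∈ p.parts, p.parts.count m = 1 ∧
        (∀ x ∈ p.parts, x ≤ m) ∧ (p.parts.erase m).sum = m ∧
        ∀ x ∈ p.parts.erase m, ¬ ℓ ∣ x} := by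
      constructor
      rintro ⟨p, m, hm, -, -, hsum, -⟩
      have h2 : m ::ₘ p.parts.erase m = p.parts := Multiset.cons_erase hm
      have h1 : p.parts.sum = 2 * n + 1 := p.parts_sum
      rw [← h2, Multiset.sum_cons, hsum] at h1
      omega
    unfold rhoReg
    exact Nat.card_of_isEmpty
end

section
/- For every positive integer k and every n ≥ 2, ρ_{-k}(2n) = p_{-k}(n) − k and ρ_{-k}(2n+1) = 0. -/
/-- `ρ_{-k}(n)`: the number of partitions of `n` whose largest part `m` occurs exactly
once and whose remaining parts form a `k`-coloured partition of `m`, recorded as the pair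
of `m` and the multiset of (part, colour) pairs of the remaining parts. -/
noncomputable def rhoColor (k n : ℕ) : ℕ :=
  Nat.card {mc : ℕ × Multiset (ℕ × Fin k) // n = 2 * mc.1 ∧ 0 < mc.1 ∧
    (mc.2.map Prod.fst).sum = mc.1 ∧ ∀ x ∈ mc.2, 0 < x.1 ∧ x.1 < mc.1}

/-- `p_{-k}(n)`: the number of `k`-coloured partitions of `n`, i.e. multisets of
(part, colour) pairs with positive parts summing to `n`. -/
noncomputable def pColor (k n : ℕ) : ℕ :=
  Nat.card {c : Multiset (ℕ × Fin k) // (c.map Prod.fst).sum = n ∧ ∀ x ∈ c, 0 < x.1}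

/-- For every `k ≥ 1` and `n ≥ 2`, `ρ_{-k}(2n) = p_{-k}(n) − k` and `ρ_{-k}(2n+1) = 0`. -/
theorem rhoColor_even_odd (k : ℕ) (hk : 0 < k) (n : ℕ) (hn : 2 ≤ n) :
    rhoColor k (2 * n) = pColor k n - k ∧ rhoColor k (2 * n + 1) = 0 := by
  classical
  -- the type of k-coloured partitions of n
  set P := {c : Multiset (ℕ × Fin k) // (c.map Prod.fst).sum = n ∧ ∀ x ∈ c, 0 < x.1} with hP
  -- finiteness of P
  have hfinP : Finite P := by
    set t : Multiset (ℕ × Fin k) :=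
      n • ((Finset.range (n + 1) ×ˢ (Finset.univ : Finset (Fin k))).val) with ht
    apply Finite.of_injective (fun c : P => (⟨c.1, by
      rw [Multiset.mem_powerset]
      obtain ⟨c, hsum, hpos⟩ := c
      rw [Multiset.le_iff_count]
      intro x
      by_cases hx : x ∈ c
      · have hcard : Multiset.card c ≤ n := by
          have h1 : ((c.map (fun _ => 1 : ℕ × Fin k → ℕ)).sum ≤ (c.map Prod.fst).sum) :=
            Multiset.sum_map_le_sum_map _ _ fun i hi => (hpos i hi)
          have h2 : (c.map (fun _ => (1:ℕ))).sum = Multiset.card c := by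
            simp [Multiset.map_const', Multiset.sum_replicate]
          omega
        have hxle : x.1 ≤ n := by
          have : x.1 ∈ c.map Prod.fst := Multiset.mem_map_of_mem _ hx
          exact (Multiset.single_le_sum (fun y _ => Nat.zero_le y) _ this).trans_eq hsum
        have hmem : x ∈ (Finset.range (n + 1) ×ˢ (Finset.univ : Finset (Fin k))) := by
          simp [Finset.mem_product, Finset.mem_range]; omega
        have : Multiset.count x t = n := by
          rw [ht, Multiset.count_nsmul, Multiset.count_eq_one_of_mem (Finset.nodup _) hmem,
            mul_one]
        rw [this]
        exact (Multiset.count_le_card x c).trans hcard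
      · simp [Multiset.count_eq_zero_of_notMem hx]
    ⟩ : {s : Multiset (ℕ × Fin k) // s ∈ t.powerset}))
      (fun a b hab => by have h := congrArg Subtype.val hab; exact Subtype.ext h)
  -- the predicate "all parts are < n"
  set p : P → Prop := fun c => ∀ x ∈ c.1, x.1 < n with hp
  -- A: partitions with all parts < n
  have e1 : {mc : ℕ × Multiset (ℕ × Fin k) // 2 * n = 2 * mc.1 ∧ 0 < mc.1 ∧
      (mc.2.map Prod.fst).sum = mc.1 ∧ ∀ x ∈ mc.2, 0 < x.1 ∧ x.1 < mc.1} ≃ {c : P // p c} := by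
    refine ⟨fun mc => ⟨⟨mc.1.2, by
        obtain ⟨⟨m, c⟩, h1, h2, h3, h4⟩ := mc
        have : m = n := by omega
        subst this
        exact ⟨h3, fun x hx => (h4 x hx).1⟩⟩, by
        obtain ⟨⟨m, c⟩, h1, h2, h3, h4⟩ := mc
        have : m = n := by omega
        subst this
        exact fun x hx => (h4 x hx).2⟩,
      fun c => ⟨(n, c.1.1), rfl, by omega, c.1.2.1, fun x hx => ⟨c.1.2.2 x hx, c.2 x hx⟩⟩,
      fun mc => by
        obtain ⟨⟨m, c⟩, h1, h2, h3, h4⟩ := mc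
        have : m = n := by omega
        subst this; rfl,
      fun c => rfl⟩
  -- B: the complement is in bijection with Fin k
  let e2 : Fin k → {c : P // ¬ p c} := fun i =>
    ⟨⟨{(n, i)}, by simp, by simp; omega⟩, by
      intro h
      have := h (n, i) (by simp)
      omega⟩
  have he2 : Function.Bijective e2 := by
    constructor
    · intro i j hij
      have h1 : ({((n : ℕ), i)} : Multiset (ℕ × Fin k)) = {(n, j)} :=
        congrArg (fun x => (x : {c : P // ¬ p c}).1.1) hij
      exact congrArg Prod.snd (Multiset.singleton_inj.mp h1)
    · rintro ⟨⟨c, hsum, hpos⟩, hnp⟩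
      have hnp' : ¬ ∀ x ∈ c, x.1 < n := hnp
      push_neg at hnp'
      obtain ⟨x, hx, hxn⟩ := hnp'
      obtain ⟨c', rfl⟩ := Multiset.exists_cons_of_mem hx
      have hsum' : x.1 + (c'.map Prod.fst).sum = n := by simpa using hsum
      have hx1 : x.1 = n := by
        have := hpos x (by simp)
        omega
      have hc' : c' = 0 := by
        by_contra h
        obtain ⟨y, hy⟩ := Multiset.exists_mem_of_ne_zero h
        have := hpos y (by simp [hy])
        have hy1 : y.1 ∈ c'.map Prod.fst := Multiset.mem_map_of_mem _ hy
        have := Multiset.single_le_sum (fun z _ => Nat.zero_le z) _ hy1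
        omega
      subst hc'
      refine ⟨x.2, ?_⟩
      apply Subtype.ext; apply Subtype.ext
      show ({(n, x.2)} : Multiset (ℕ × Fin k)) = x ::ₘ 0
      rw [Multiset.cons_zero, Multiset.singleton_inj]
      exact Prod.ext hx1.symm rfl
  -- card of P = card A + k
  have hcardP : Nat.card P = Nat.card {c : P // p c} + k := by
    have := Nat.card_congr (Equiv.sumCompl p)
    rw [← this, Nat.card_sum, Nat.card_congr (Equiv.ofBijective e2 he2).symm]
    simp
  have hrho : rhoColor k (2 * n) = Nat.card {c : P // p c} := by
    rw [rhoColor]; exact Nat.card_congr e1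
  constructor
  · rw [hrho, pColor, ← hP, hcardP]; omega
  · rw [rhoColor]
    have : IsEmpty {mc : ℕ × Multiset (ℕ × Fin k) // 2 * n + 1 = 2 * mc.1 ∧ 0 < mc.1 ∧
        (mc.2.map Prod.fst).sum = mc.1 ∧ ∀ x ∈ mc.2, 0 < x.1 ∧ x.1 < mc.1} := by
      constructor; rintro ⟨⟨m, c⟩, h1, _⟩; omega
    exact Nat.card_of_isEmpty
end

section
/- For every n ≥ 3, ρ_pod(2n) = pod(n) − 1 and ρ_pod(2n+1) = 0, with ρ_pod(m) = 0 for m ≤ 5. -/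
/-- `ρ_pod(n)`: the number of partitions of `n` whose largest part `m` occurs exactly
once and whose remaining parts form a partition of `m` with distinct odd parts. -/
noncomputable def rhoPod (n : ℕ) : ℕ :=
  Nat.card {p : n.Partition // ∃ m ∈ p.parts, p.parts.count m = 1 ∧
    (∀ x ∈ p.parts, x ≤ m) ∧ (p.parts.erase m).sum = m ∧
    ∀ x ∈ p.parts.erase m, Odd x → (p.parts.erase m).count x = 1}

/-- `pod(n)`: the number of partitions of `n` with distinct odd parts
(even parts unrestricted). -/
noncomputable def pod (n : ℕ) : ℕ :=
  Nat.card {p : n.Partition // ∀ x ∈ p.parts, Odd x → p.parts.count x = 1}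

section aux

lemma sum_eq_add_erase {s : Multiset ℕ} {m : ℕ} (h : m ∈ s) :
    s.sum = m + (s.erase m).sum := by
  conv_lhs => rw [← Multiset.cons_erase h]
  simp

/-- In any partition counted by `rhoPod N`, the distinguished part `m` satisfies `2 * m = N`. -/
lemma m_eq {N : ℕ} {p : N.Partition} {m : ℕ} (hm : m ∈ p.parts)
    (hsum : (p.parts.erase m).sum = m) : 2 * m = N := by
  have := sum_eq_add_erase hm
  rw [p.parts_sum, hsum] at this
  omega

/-- For a partition counted by `rhoPod (2 * n)`, the distinguished part is `n` itself. -/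
lemma key {n : ℕ} {p : (2 * n).Partition}
    (hp : ∃ m ∈ p.parts, p.parts.count m = 1 ∧
      (∀ x ∈ p.parts, x ≤ m) ∧ (p.parts.erase m).sum = m ∧
      ∀ x ∈ p.parts.erase m, Odd x → (p.parts.erase m).count x = 1) :
    n ∈ p.parts ∧ p.parts.count n = 1 ∧ (p.parts.erase n).sum = n ∧
      ∀ x ∈ p.parts.erase n, Odd x → (p.parts.erase n).count x = 1 := by
  obtain ⟨m, hm, hc, -, hs, ho⟩ := hp
  have hmn : m = n := by have := m_eq hm hs; omega
  subst hmn
  exact ⟨hm, hc, hs, ho⟩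

lemma rhoPod_odd (k : ℕ) : rhoPod (2 * k + 1) = 0 := by
  rw [rhoPod, Nat.card_eq_zero]
  left
  constructor
  rintro ⟨p, m, hm, -, -, hsum, -⟩
  have := m_eq hm hsum
  omega

lemma multiset_sum_zero {s : Multiset ℕ} (hpos : ∀ x ∈ s, 0 < x) (hs : s.sum = 0) :
    s = 0 := by
  rw [Multiset.eq_zero_iff_forall_notMem]
  intro a ha
  have h1 := hpos a ha
  have h2 : a ≤ s.sum := Multiset.single_le_sum (fun _ _ => Nat.zero_le _) a ha
  omega

lemma multiset_sum_one {s : Multiset ℕ} (hpos : ∀ x ∈ s, 0 < x) (hs : s.sum = 1) :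
    s = {1} := by
  induction s using Multiset.induction with
  | empty => simp at hs
  | cons a t _ =>
    have hap : 0 < a := hpos a (Multiset.mem_cons_self a t)
    rw [Multiset.sum_cons] at hs
    have ha : a = 1 := by omega
    have ht : t = 0 := multiset_sum_zero (fun x hx => hpos x (Multiset.mem_cons_of_mem hx))
      (by omega)
    subst ha; subst ht; rfl

lemma multiset_sum_two {s : Multiset ℕ} (hpos : ∀ x ∈ s, 0 < x) (hs : s.sum = 2) :
    s = {2} ∨ s = {1, 1} := by
  induction s using Multiset.induction with
  | empty => simp at hs
  | cons a t _ =>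
    have hap : 0 < a := hpos a (Multiset.mem_cons_self a t)
    rw [Multiset.sum_cons] at hs
    have htpos : ∀ x ∈ t, 0 < x := fun x hx => hpos x (Multiset.mem_cons_of_mem hx)
    have ha2 : a ≤ 2 := by omega
    interval_cases a
    · right
      have := multiset_sum_one htpos (by omega)
      subst this; rfl
    · left
      have := multiset_sum_zero htpos (by omega)
      subst this; rfl

end aux

open Multiset in
lemma rhoPod_two_mul {n : ℕ} (hn : 1 ≤ n) : rhoPod (2 * n) = pod n - 1 := by
  classical
  have hne : n ≠ 0 := by omega
  set S : Set (Nat.Partition n) := {q | ∀ x ∈ q.parts, Odd x → q.parts.count x = 1} with hS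
  have e : {p : (2 * n).Partition // ∃ m ∈ p.parts, p.parts.count m = 1 ∧
      (∀ x ∈ p.parts, x ≤ m) ∧ (p.parts.erase m).sum = m ∧
      ∀ x ∈ p.parts.erase m, Odd x → (p.parts.erase m).count x = 1} ≃
      ↥(S \ {Nat.Partition.indiscrete n}) := by
    refine Equiv.ofBijective
      (fun P => ⟨⟨P.1.parts.erase n,
          fun hx => P.1.parts_pos (Multiset.mem_of_mem_erase hx),
          (key P.2).2.2.1⟩, ?_, ?_⟩) ⟨?_, ?_⟩
    · exact fun x hx hox => (key P.2).2.2.2 x hx hox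
    · -- not the indiscrete partition
      intro hcontra
      rw [Set.mem_singleton_iff] at hcontra
      have hparts : P.1.parts.erase n = ({n} : Multiset ℕ) := by
        have := congrArg Nat.Partition.parts hcontra
        simpa [Nat.Partition.indiscrete_parts hne] using this
      have h1 : (P.1.parts.erase n).count n = 1 := by rw [hparts]; simp
      rw [Multiset.count_erase_self, (key P.2).2.1] at h1
      omega
    · -- injectivity
      rintro ⟨p, hp⟩ ⟨p', hp'⟩ hpp
      have hE : p.parts.erase n = p'.parts.erase n :=
        congrArg (fun q : ↥(S \ {Nat.Partition.indiscrete n}) => (q : Nat.Partition n).parts) hpp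
      apply Subtype.ext
      apply Nat.Partition.ext
      calc p.parts = n ::ₘ p.parts.erase n := (Multiset.cons_erase (key hp).1).symm
        _ = n ::ₘ p'.parts.erase n := by rw [hE]
        _ = p'.parts := Multiset.cons_erase (key hp').1
    · -- surjectivity
      rintro ⟨q, hq, hne'⟩
      rw [Set.mem_singleton_iff] at hne'
      have hnq : n ∉ q.parts := by
        intro hnq
        apply hne'
        have hz : (q.parts.erase n).sum = 0 := by
          have := sum_eq_add_erase hnq
          rw [q.parts_sum] at this
          omega
        have he : q.parts.erase n = 0 :=
          multiset_sum_zero (fun x hx => q.parts_pos (Multiset.mem_of_mem_erase hx)) hz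
        have hq1 : q.parts = {n} := by
          have := Multiset.cons_erase hnq
          rw [he] at this
          simpa using this.symm
        apply Nat.Partition.ext
        rw [hq1, Nat.Partition.indiscrete_parts hne]
      refine ⟨⟨⟨n ::ₘ q.parts, ?_, by simp [q.parts_sum]; ring⟩, ?_⟩, ?_⟩
      · intro x hx
        rcases Multiset.mem_cons.mp hx with h | h
        · omega
        · exact q.parts_pos h
      · refine ⟨n, Multiset.mem_cons_self _ _, ?_, ?_, ?_, ?_⟩
        · simp [Multiset.count_cons_self, Multiset.count_eq_zero_of_notMem hnq]
        · intro x hx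
          rcases Multiset.mem_cons.mp hx with h | h
          · omega
          · calc x ≤ q.parts.sum := Multiset.single_le_sum (fun _ _ => Nat.zero_le _) x h
              _ = n := q.parts_sum
        · rw [Multiset.erase_cons_head, q.parts_sum]
        · rw [Multiset.erase_cons_head]
          exact hq
      · apply Subtype.ext
        apply Nat.Partition.ext
        simp only [Multiset.erase_cons_head]
  rw [rhoPod, Nat.card_congr e, pod]
  have hSmem : Nat.Partition.indiscrete n ∈ S := by
    intro x hx hox
    rw [Nat.Partition.indiscrete_parts hne] at hx ⊢
    simp_all
  rw [Nat.card_coe_set_eq, Set.ncard_diff_singleton_of_mem hSmem,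
    ← Nat.card_coe_set_eq S]
  rfl

lemma rhoPod_two : rhoPod 2 = 0 := by
  rw [rhoPod, Nat.card_eq_zero]
  left
  constructor
  rintro ⟨p, hp⟩
  obtain ⟨hm, hc, hs, -⟩ := key (n := 1) hp
  have he : p.parts.erase 1 = {1} :=
    multiset_sum_one (fun x hx => p.parts_pos (Multiset.mem_of_mem_erase hx)) hs
  have h1 : (p.parts.erase 1).count 1 = 1 := by rw [he]; simp
  rw [Multiset.count_erase_self, hc] at h1
  omega

lemma rhoPod_four : rhoPod 4 = 0 := by
  rw [rhoPod, Nat.card_eq_zero]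
  left
  constructor
  rintro ⟨p, hp⟩
  obtain ⟨hm, hc, hs, ho⟩ := key (n := 2) hp
  rcases multiset_sum_two (fun x hx => p.parts_pos (Multiset.mem_of_mem_erase hx)) hs with
    he | he
  · have h1 : (p.parts.erase 2).count 2 = 1 := by rw [he]; simp
    rw [Multiset.count_erase_self, hc] at h1
    omega
  · have h1 : (p.parts.erase 2).count 1 = 1 := by
      refine ho 1 ?_ (by decide)
      rw [he]; decide
    rw [he] at h1
    simp at h1

lemma rhoPod_zero : rhoPod 0 = 0 := by
  rw [rhoPod, Nat.card_eq_zero]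
  left
  constructor
  rintro ⟨p, m, hm, -⟩
  have h1 := p.parts_pos hm
  have h2 : m ≤ p.parts.sum := Multiset.single_le_sum (fun _ _ => Nat.zero_le _) _ hm
  rw [p.parts_sum] at h2
  omega

/-- For every `n ≥ 3`, `ρ_pod(2n) = pod(n) − 1` and `ρ_pod(2n+1) = 0`; moreover
`ρ_pod(m) = 0` for all `m ≤ 5`. -/
theorem rhoPod_even_odd :
    (∀ n : ℕ, 3 ≤ n → rhoPod (2 * n) = pod n - 1 ∧ rhoPod (2 * n + 1) = 0) ∧
      ∀ m : ℕ, m ≤ 5 → rhoPod m = 0 := by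
  constructor
  · intro n hn
    exact ⟨rhoPod_two_mul (by omega), rhoPod_odd n⟩
  · intro m hm
    interval_cases m
    · exact rhoPod_zero
    · exact rhoPod_odd 0
    · exact rhoPod_two
    · exact rhoPod_odd 1
    · exact rhoPod_four
    · exact rhoPod_odd 2
end

section
/- For every even n ≥ 2, ρ_c(2n) = a_c(n) − 2, and for every odd n ≥ 3, ρ_c(2n) = a_c(n) − 1, where a_c denotes the cubic partition function; moreover ρ_c(2n+1) = 0 for all n. -/
/-- `ρ_c(n)`: the number of partitions of `n` whose largest part `m` occurs exactly once
and whose remaining parts form a cubic partition of `m` (even parts in two colours),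
recorded as the pair of `m` and the multiset of (part, colour) pairs of the remaining
parts, odd parts carrying the fixed colour `0`. -/
noncomputable def rhoCubic (n : ℕ) : ℕ :=
  Nat.card {mc : ℕ × Multiset (ℕ × Fin 2) // n = 2 * mc.1 ∧ 0 < mc.1 ∧
    (mc.2.map Prod.fst).sum = mc.1 ∧ (∀ x ∈ mc.2, 0 < x.1 ∧ x.1 < mc.1) ∧
    ∀ x ∈ mc.2, ¬ 2 ∣ x.1 → x.2 = 0}

/-- `a_c(n)`: the number of cubic partitions of `n`, i.e. multisets of (part, colour)
pairs with positive parts summing to `n` in which odd parts carry the fixed colour `0`. -/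
noncomputable def cubicCount (n : ℕ) : ℕ :=
  Nat.card {c : Multiset (ℕ × Fin 2) // (c.map Prod.fst).sum = n ∧
    (∀ x ∈ c, 0 < x.1) ∧ ∀ x ∈ c, ¬ 2 ∣ x.1 → x.2 = 0}

private def Scub (n : ℕ) : Set (Multiset (ℕ × Fin 2)) :=
  {c | (c.map Prod.fst).sum = n ∧ (∀ x ∈ c, 0 < x.1) ∧ ∀ x ∈ c, ¬ 2 ∣ x.1 → x.2 = 0}

private def Acub (n : ℕ) : Set (Multiset (ℕ × Fin 2)) :=
  {c | (c.map Prod.fst).sum = n ∧ (∀ x ∈ c, 0 < x.1 ∧ x.1 < n) ∧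
    ∀ x ∈ c, ¬ 2 ∣ x.1 → x.2 = 0}

private lemma mem_fst_le_sum {c : Multiset (ℕ × Fin 2)} {x : ℕ × Fin 2} (hx : x ∈ c) :
    x.1 ≤ (c.map Prod.fst).sum :=
  Multiset.single_le_sum (fun _ _ => Nat.zero_le _) _ (Multiset.mem_map_of_mem _ hx)

private lemma Scub_finite (n : ℕ) : (Scub n).Finite := by
  have hcard : ∀ c ∈ Scub n, Multiset.card c ≤ n := by
    intro c hc
    obtain ⟨h1, h2, -⟩ := hc
    have hle : Multiset.card (c.map Prod.fst) • 1 ≤ (c.map Prod.fst).sum := by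
      apply Multiset.card_nsmul_le_sum
      intro x hx
      obtain ⟨y, hy, rfl⟩ := Multiset.mem_map.1 hx
      exact h2 y hy
    simpa [h1] using hle
  set f : Multiset (ℕ × Fin 2) → (Fin (n + 1) × Fin 2 → Fin (n + 1)) := fun c k =>
    ⟨min (c.count (k.1.1, k.2)) n, by omega⟩ with hf
  apply Set.Finite.of_finite_image (f := f) (Set.toFinite _)
  intro c1 h1 c2 h2 heq
  have hc1 : ∀ a : ℕ × Fin 2, a ∈ c1 → a.1 ≤ n := fun a ha => h1.1 ▸ mem_fst_le_sum ha
  have hc2 : ∀ a : ℕ × Fin 2, a ∈ c2 → a.1 ≤ n := fun a ha => h2.1 ▸ mem_fst_le_sum ha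
  ext a
  obtain ⟨m, i⟩ := a
  by_cases hm : m ≤ n
  · have := congrFun heq (⟨m, by omega⟩, i)
    have hv := congrArg Fin.val this
    simp only [hf] at hv
    have b1 : c1.count (m, i) ≤ n := le_trans (Multiset.count_le_card _ _) (hcard c1 h1)
    have b2 : c2.count (m, i) ≤ n := le_trans (Multiset.count_le_card _ _) (hcard c2 h2)
    omega
  · have n1 : (m, i) ∉ c1 := fun h => hm (hc1 _ h)
    have n2 : (m, i) ∉ c2 := fun h => hm (hc2 _ h)
    rw [Multiset.count_eq_zero_of_notMem n1, Multiset.count_eq_zero_of_notMem n2]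

private lemma cubicCount_eq (n : ℕ) : cubicCount n = (Scub n).ncard := by
  rw [cubicCount, ← Nat.card_coe_set_eq]
  rfl

private lemma rho_eq (n : ℕ) (hn : 0 < n) : rhoCubic (2 * n) = (Acub n).ncard := by
  rw [rhoCubic, ← Nat.card_coe_set_eq]
  apply Nat.card_congr
  refine ⟨fun mc => ⟨mc.1.2, ?_⟩, fun c => ⟨(n, c.1), rfl, hn, c.2.1, c.2.2.1, c.2.2.2⟩,
    fun mc => ?_, fun c => rfl⟩
  · obtain ⟨heq, hpos, hsum, hlt, hcol⟩ := mc.2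
    have hm : mc.1.1 = n := by omega
    exact ⟨hsum.trans hm, fun x hx => ⟨(hlt x hx).1, ((hlt x hx).2).trans_le hm.le⟩, hcol⟩
  · have hm : mc.1.1 = n := by have := mc.2.1; omega
    apply Subtype.ext
    exact Prod.ext hm.symm rfl

/-- If a part equals `n`, the partition is a singleton. -/
private lemma eq_singleton {n : ℕ} {c : Multiset (ℕ × Fin 2)} (hc : c ∈ Scub n)
    {x : ℕ × Fin 2} (hx : x ∈ c) (hxn : x.1 = n) : c = {x} := by
  obtain ⟨t, rfl⟩ := Multiset.exists_cons_of_mem hx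
  obtain ⟨h1, h2, -⟩ := hc
  simp only [Multiset.map_cons, Multiset.sum_cons, hxn] at h1
  have ht : (t.map Prod.fst).sum = 0 := by omega
  have : t = 0 := by
    rw [Multiset.eq_zero_iff_forall_notMem]
    intro y hy
    have := mem_fst_le_sum hy
    have := h2 y (Multiset.mem_cons_of_mem hy)
    omega
  rw [this]
  rfl

private lemma singleton_ne : ∀ n : ℕ, ({(n, (0 : Fin 2))} : Multiset (ℕ × Fin 2)) ≠ {(n, 1)} := by
  intro n h
  have := Multiset.singleton_inj.mp h
  have := congrArg Prod.snd this
  simp at this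

private lemma split_even {n : ℕ} (hn : 0 < n) (he : 2 ∣ n) :
    Scub n = Acub n ∪ {({(n, (0 : Fin 2))} : Multiset (ℕ × Fin 2)), {(n, 1)}} := by
  ext c
  constructor
  · intro hc
    by_cases hx : ∃ x ∈ c, x.1 = n
    · obtain ⟨x, hxc, hxn⟩ := hx
      have := eq_singleton hc hxc hxn
      right
      obtain ⟨m, i⟩ := x
      dsimp at hxn
      subst hxn
      fin_cases i
      · left; exact this
      · right; exact this
    · push_neg at hx
      left
      obtain ⟨h1, h2, h3⟩ := hc
      refine ⟨h1, fun x hxc => ⟨h2 x hxc, ?_⟩, h3⟩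
      have := mem_fst_le_sum hxc
      have := hx x hxc
      omega
  · rintro (⟨h1, h2, h3⟩ | h | h)
    · exact ⟨h1, fun x hx => (h2 x hx).1, h3⟩
    · subst h
      refine ⟨by simp, by simp [hn], ?_⟩
      intro x hx h2
      simp only [Multiset.mem_singleton] at hx
      subst hx
      rfl
    · simp only [Set.mem_singleton_iff] at h
      subst h
      refine ⟨by simp, by simp [hn], ?_⟩
      intro x hx h2
      simp only [Multiset.mem_singleton] at hx
      subst hx
      exact absurd he h2

private lemma split_odd {n : ℕ} (hn : 0 < n) (he : ¬ 2 ∣ n) :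
    Scub n = Acub n ∪ {({(n, (0 : Fin 2))} : Multiset (ℕ × Fin 2))} := by
  ext c
  constructor
  · intro hc
    by_cases hx : ∃ x ∈ c, x.1 = n
    · obtain ⟨x, hxc, hxn⟩ := hx
      have hcx := eq_singleton hc hxc hxn
      right
      obtain ⟨m, i⟩ := x
      dsimp at hxn
      subst hxn
      have hi : i = 0 := hc.2.2 _ hxc he
      subst hi
      exact hcx
    · push_neg at hx
      left
      obtain ⟨h1, h2, h3⟩ := hc
      refine ⟨h1, fun x hxc => ⟨h2 x hxc, ?_⟩, h3⟩
      have := mem_fst_le_sum hxc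
      have := hx x hxc
      omega
  · rintro (⟨h1, h2, h3⟩ | h)
    · exact ⟨h1, fun x hx => (h2 x hx).1, h3⟩
    · simp only [Set.mem_singleton_iff] at h
      subst h
      refine ⟨by simp, by simp [hn], ?_⟩
      intro x hx
      simp only [Multiset.mem_singleton] at hx
      subst hx
      intro; rfl

private lemma Acub_finite (n : ℕ) : (Acub n).Finite :=
  (Scub_finite n).subset (fun c hc => ⟨hc.1, fun x hx => (hc.2.1 x hx).1, hc.2.2⟩)

private lemma notMem_Acub {n : ℕ} (i : Fin 2) :
    ({(n, i)} : Multiset (ℕ × Fin 2)) ∉ Acub n := by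
  intro h
  have := (h.2.1 (n, i) (Multiset.mem_singleton_self _)).2
  omega

/-- For even `n ≥ 2`, `ρ_c(2n) = a_c(n) − 2`; for odd `n ≥ 3`, `ρ_c(2n) = a_c(n) − 1`;
and `ρ_c(2n+1) = 0` for all `n`. -/
theorem rhoCubic_even_odd :
    (∀ n : ℕ, 2 ≤ n → Even n → rhoCubic (2 * n) = cubicCount n - 2) ∧
      (∀ n : ℕ, 3 ≤ n → Odd n → rhoCubic (2 * n) = cubicCount n - 1) ∧
      ∀ n : ℕ, rhoCubic (2 * n + 1) = 0 := by
  refine ⟨?_, ?_, ?_⟩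
  · intro n hn he
    have hn0 : 0 < n := by omega
    have hd : 2 ∣ n := he.two_dvd
    have hdisj : Disjoint (Acub n)
        {({(n, (0 : Fin 2))} : Multiset (ℕ × Fin 2)), {(n, 1)}} := by
      rw [Set.disjoint_right]
      rintro c (rfl | rfl) <;> exact notMem_Acub _
    rw [cubicCount_eq, split_even hn0 hd,
      Set.ncard_union_eq hdisj (Acub_finite n) ((Set.finite_singleton _).insert _),
      Set.ncard_pair (singleton_ne n), rho_eq n hn0]
    omega
  · intro n hn ho
    have hn0 : 0 < n := by omega
    have hd : ¬ 2 ∣ n := by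
      rintro ⟨j, hj⟩
      obtain ⟨k, hk⟩ := ho
      omega
    have hdisj : Disjoint (Acub n)
        {({(n, (0 : Fin 2))} : Multiset (ℕ × Fin 2))} := by
      rw [Set.disjoint_right]
      rintro c h
      simp only [Set.mem_singleton_iff] at h
      subst h
      exact notMem_Acub _
    rw [cubicCount_eq, split_odd hn0 hd,
      Set.ncard_union_eq hdisj (Acub_finite n) (Set.finite_singleton _),
      Set.ncard_singleton, rho_eq n hn0]
    omega
  · intro n
    rw [rhoCubic]
    have : IsEmpty {mc : ℕ × Multiset (ℕ × Fin 2) // 2 * n + 1 = 2 * mc.1 ∧ 0 < mc.1 ∧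
        (mc.2.map Prod.fst).sum = mc.1 ∧ (∀ x ∈ mc.2, 0 < x.1 ∧ x.1 < mc.1) ∧
        ∀ x ∈ mc.2, ¬ 2 ∣ x.1 → x.2 = 0} := ⟨fun x => by have := x.2.1; omega⟩
    exact Nat.card_of_isEmpty
end
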